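/- arXiv:1411.0155 — 2 statements merged into one kernel-verified Lean document; each statement's English description precedes it below -/
import Mathlib

section
/- Suppose F(·,x,a) has bounded variation along x̄ uniformly over A with cumulative variation function η, let δ̄>0 satisfy η^δ̄(T) < ∞, assume (C1) and (C2), and let F̃ be the multifunction obtained from F by replacing its values at the endpoints by the one-sided limits F(S⁺,x,a) (for |x−x̄(S)| < δ̄) and F(T⁻,x,a) (for |x−x̄(T)| < δ̄). Then for every δ ∈ (0,δ̄) and every t ∈ (S,T): η̃^δ(t) = η^δ(t) − sup{ d_H(F(S,x,a), F(S⁺,x,a)) : x ∈ x̄(S)+δ𝔹, a ∈ A }. In particular, η̃^δ(t) − η̃^δ(s) = η^δ(t) − η^δ(s) for every [s,t] ⊂ (S,T). The same relation holds with δ = 0, interpreting η^0 = η and η̃^0 = η̃. -/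
open Set Metric Filter MeasureTheory Pointwise
open scoped ENNReal Topology

noncomputable section

/-- Euclidean `n`-space `ℝⁿ`. -/
abbrev En (n : ℕ) : Type := EuclideanSpace ℝ (Fin n)

/-- A partition `{t₀ = S, t₁, …, t_N = t}` of the interval `[S, t]`. -/
structure MvPartition (S t : ℝ) where
  N : ℕ
  pts : ℕ → ℝ
  hN : 0 < N
  first : pts 0 = S
  last : pts N = t
  mono : ∀ i, i < N → pts i < pts (i + 1)

/-- `diam(𝒯) ≤ ε` : every subinterval of the partition has length at most `ε`. -/
def MvPartition.diamLE {S t : ℝ} (P : MvPartition S t) (ε : ℝ) : Prop :=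
  ∀ i, i < P.N → P.pts (i + 1) - P.pts i ≤ ε

/-- The sum `I^δ(𝒯) = Σᵢ sup { d_H(F(tᵢ₊₁,x,a), F(tᵢ,x,a)) :
x ∈ x̄([tᵢ,tᵢ₊₁]) + δ𝔹, a ∈ A }` for a multifunction `F` along `x̄`, uniformly over `A`. -/
noncomputable def mvSum {n k : ℕ} (F : ℝ → En n → En k → Set (En n))
    (xbar : ℝ → En n) (A : Set (En k)) (δ : ℝ) {S t : ℝ} (P : MvPartition S t) : ℝ≥0∞ :=
  ∑ i ∈ Finset.range P.N,
    ⨆ x ∈ xbar '' Set.Icc (P.pts i) (P.pts (i + 1)) + Metric.closedBall (0 : En n) δ,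
      ⨆ a ∈ A, EMetric.hausdorffEdist (F (P.pts (i + 1)) x a) (F (P.pts i) x a)

/-- The `(δ,ε)`-perturbed cumulative variation function `η^δ_ε(t)`:
the supremum of `I^δ(𝒯)` over partitions `𝒯` of `[S,t]` with `diam(𝒯) ≤ ε`.
(For `t = S` there are no partitions and the value is `0`.) -/
noncomputable def mvEtaEps {n k : ℕ} (F : ℝ → En n → En k → Set (En n))
    (xbar : ℝ → En n) (A : Set (En k)) (δ ε : ℝ) (S t : ℝ) : ℝ≥0∞ :=
  ⨆ (P : MvPartition S t) (_ : P.diamLE ε), mvSum F xbar A δ P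

/-- The `δ`-perturbed cumulative variation function `η^δ(t) = lim_{ε↓0} η^δ_ε(t)`
(the limit of the decreasing-in-`ε` family equals the infimum). -/
noncomputable def mvEtaDelta {n k : ℕ} (F : ℝ → En n → En k → Set (En n))
    (xbar : ℝ → En n) (A : Set (En k)) (δ : ℝ) (S t : ℝ) : ℝ≥0∞ :=
  ⨅ (ε : ℝ) (_ : 0 < ε), mvEtaEps F xbar A δ ε S t

/-- The cumulative variation function `η(t) = lim_{δ↓0} η^δ(t)`. -/
noncomputable def mvEta {n k : ℕ} (F : ℝ → En n → En k → Set (En n))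
    (xbar : ℝ → En n) (A : Set (En k)) (S t : ℝ) : ℝ≥0∞ :=
  ⨅ (δ : ℝ) (_ : 0 < δ), mvEtaDelta F xbar A δ S t

/-- `F(·,x,a)` has bounded variation along `x̄` uniformly over `A` : `η(T) < ∞`. -/
def HasBVAlongUniformly {n k : ℕ} (F : ℝ → En n → En k → Set (En n))
    (xbar : ℝ → En n) (A : Set (En k)) (S T : ℝ) : Prop :=
  mvEta F xbar A S T < ⊤

/-- Hypothesis (C1): nonempty closed values, measurability in `t` (Castaing-type
characterization via distance functions), and uniform boundedness near `x̄`. -/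
def HypC1 {n k : ℕ} (F : ℝ → En n → En k → Set (En n))
    (xbar : ℝ → En n) (A : Set (En k)) (S T δbar : ℝ) : Prop :=
  (∀ t ∈ Set.Icc S T, ∀ x : En n, ∀ a ∈ A, (F t x a).Nonempty ∧ IsClosed (F t x a)) ∧
  (∀ x : En n, ∀ a ∈ A, ∀ v : En n,
      Measurable fun t : ℝ => EMetric.infEdist v (F t x a)) ∧
  (∃ c : ℝ, 0 < c ∧ ∀ t ∈ Set.Icc S T, ∀ x ∈ Metric.closedBall (xbar t) δbar, ∀ a ∈ A,
      F t x a ⊆ Metric.closedBall (0 : En n) c)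

/-- Hypothesis (C2): uniform continuity of `(x,a) ↦ F(t,x,a)` near `x̄`,
with a modulus of continuity `γ`. -/
def HypC2 {n k : ℕ} (F : ℝ → En n → En k → Set (En n))
    (xbar : ℝ → En n) (A : Set (En k)) (S T δbar : ℝ) : Prop :=
  ∃ γ : ℝ → ℝ, (∀ s, 0 ≤ γ s) ∧ Tendsto γ (𝓝[>] (0 : ℝ)) (𝓝 0) ∧
    ∀ t ∈ Set.Icc S T, ∀ x ∈ Metric.closedBall (xbar t) δbar,
      ∀ x' ∈ Metric.closedBall (xbar t) δbar, ∀ a ∈ A, ∀ a' ∈ A,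
        F t x a ⊆ F t x' a' + Metric.closedBall (0 : En n) (γ (‖x - x'‖ + ‖a - a'‖))

/-- The Kuratowski upper limit of a family of sets along a filter `l`. -/
def kLimsup {α : Type*} [PseudoEMetricSpace α] (l : Filter ℝ) (G : ℝ → Set α) : Set α :=
  {v | ∀ ε : ℝ≥0∞, 0 < ε → ∃ᶠ s in l, EMetric.infEdist v (G s) < ε}

/-- The Kuratowski lower limit of a family of sets along a filter `l`. -/
def kLiminf {α : Type*} [PseudoEMetricSpace α] (l : Filter ℝ) (G : ℝ → Set α) : Set α :=
  {v | Tendsto (fun s => EMetric.infEdist v (G s)) l (𝓝 0)}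

/-- The set-valued limit along `l` exists: upper and lower Kuratowski limits coincide. -/
def KLimExists {α : Type*} [PseudoEMetricSpace α] (l : Filter ℝ) (G : ℝ → Set α) : Prop :=
  kLimsup l G = kLiminf l G

/-- The set-valued right limit `F(s̄⁺, x, a) = lim_{s ↓ s̄} F(s,x,a)` (with `s ∈ (s̄,T]`). -/
def rightLim {n k : ℕ} (F : ℝ → En n → En k → Set (En n)) (T sbar : ℝ)
    (x : En n) (a : En k) : Set (En n) :=
  kLiminf (𝓝[Set.Ioc sbar T] sbar) fun s => F s x a

/-- The set-valued left limit `F(t̄⁻, x, a) = lim_{t ↑ t̄} F(t,x,a)` (with `t ∈ [S,t̄)`). -/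
def leftLim {n k : ℕ} (F : ℝ → En n → En k → Set (En n)) (S tbar : ℝ)
    (x : En n) (a : En k) : Set (En n) :=
  kLiminf (𝓝[Set.Ico S tbar] tbar) fun s => F s x a


open scoped Classical in
/-- The multifunction `F̃` obtained from `F` by replacing the endpoint values by the
one-sided limits: `F̃(S,x,a) = F(S⁺,x,a)` for `|x−x̄(S)| < δ̄`,
`F̃(T,x,a) = F(T⁻,x,a)` for `|x−x̄(T)| < δ̄`, and `F̃ = F` otherwise. -/
noncomputable def Ftilde {n k : ℕ} (F : ℝ → En n → En k → Set (En n))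
    (xbar : ℝ → En n) (S T δbar : ℝ) : ℝ → En n → En k → Set (En n) :=
  fun t x a =>
    if t = S ∧ ‖x - xbar S‖ < δbar then rightLim F T S x a
    else if t = T ∧ ‖x - xbar T‖ < δbar then leftLim F S T x a
    else F t x a

open scoped Classical in
/-- `η^δ(t)` for `δ > 0`, with the interpretation `η^0 = η` for `δ = 0`. -/
noncomputable def mvEtaD {n k : ℕ} (F : ℝ → En n → En k → Set (En n))
    (xbar : ℝ → En n) (A : Set (En k)) (δ : ℝ) (S t : ℝ) : ℝ≥0∞ :=
  if δ = 0 then mvEta F xbar A S t else mvEtaDelta F xbar A δ S t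

/-!
Finiteness of `η^δ̄_ε(T)` makes the increments `sup d_H(F(s',x,a), F(s,x,a))` over
`s ≤ s'` close to `S` small (the map `t ↦ η^δ̄_ε(t)` is monotone and superadditive over
adjacent short intervals), uniformly for `x` near `x̄(S)`. Since closed sets form a complete
space for the Hausdorff distance, `F(s,x,a) → F(S⁺,x,a)` uniformly as `s ↓ S`.

For `t < T`, replacing `F` by `F̃` only changes the first summand of `I^δ(𝒯)`. With `t₁`
the first point of a fine partition and `J(δ) = startJump … δ` the supremum in the statement,
`d_H(F(t₁), F(S)) ≤ d_H(F(t₁), F(S⁺)) + d_H(F(S⁺), F(S))` gives `η^δ ≤ η̃^δ + J(δ)`.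
Conversely, inserting a point `s` very close to `S`, `d_H(F(t₁), F(S⁺)) ≈ d_H(F(t₁), F(s))`
and `J(δ) ≲ sup d_H(F(s), F(S))`, which gives `η̃^δ + J(δ) ≤ η^δ`. The tubes around
`x̄([S,t₁])`, `x̄(S)` and `x̄(s)` differ by a small shift, absorbed by (C2) and the continuity
of `x̄` at `S`. For `δ = 0` let `δ ↓ 0`: `J` is right-continuous at `0` by (C2).
-/

section HausdorffLimit

variable {α : Type*} [EMetricSpace α] [CompleteSpace α] {l : Filter ℝ} [l.NeBot]
  {G : ℝ → Set α}

theorem tendsto_hausdorffEDist_kLiminf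
    (hG : ∀ ε > 0, ∃ U ∈ l, ∀ s ∈ U, ∀ s' ∈ U, hausdorffEDist (G s) (G s') ≤ ε) :
    Tendsto (fun s => hausdorffEDist (G s) (kLiminf l G)) l (𝓝 0) := by
  let G' : ℝ → TopologicalSpace.Closeds α := fun s => ⟨closure (G s), isClosed_closure⟩
  have hcauchy : Cauchy (l.map G') := by
    refine EMetric.cauchy_iff.2 ⟨(NeBot.map ‹_› G').ne, fun ε hε => ?_⟩
    obtain ⟨r, hr, hrε⟩ := exists_between hε
    obtain ⟨U, hU, hUε⟩ := hG r hr
    refine ⟨G' '' U, image_mem_map hU, ?_⟩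
    rintro _ ⟨s, hs, rfl⟩ _ ⟨s', hs', rfl⟩
    rw [TopologicalSpace.Closeds.edist_eq]
    exact (hausdorffEDist_closure.trans_le (hUε s hs s' hs')).trans_lt hrε
  obtain ⟨K, hK⟩ := CompleteSpace.complete hcauchy
  -- `K` is the Hausdorff limit of the closures; the lower Kuratowski limit is `K` itself.
  have hlim : Tendsto (fun s => hausdorffEDist (G s) K) l (𝓝 0) := by
    simpa [G', TopologicalSpace.Closeds.edist_eq, hausdorffEDist_closure_left] using
      tendsto_iff_edist_tendsto_0.1 hK
  suffices kLiminf l G = K by rwa [this]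
  ext v
  constructor
  · intro hv
    rw [← K.isClosed.closure_eq, mem_closure_iff_infEDist_zero]
    refine le_antisymm (ge_of_tendsto (by simpa using hv.add hlim) ?_) bot_le
    exact Eventually.of_forall fun s => infEDist_le_infEDist_add_hausdorffEDist
  · intro hv
    refine tendsto_of_tendsto_of_tendsto_of_le_of_le tendsto_const_nhds
      (by simpa [hausdorffEDist_comm] using hlim) (fun s => bot_le) fun s => ?_
    calc infEDist v (G s) ≤ infEDist v K + hausdorffEDist (K : Set α) (G s) :=
          infEDist_le_infEDist_add_hausdorffEDist
      _ = hausdorffEDist (G s) K := by rw [infEDist_zero_of_mem hv, zero_add, hausdorffEDist_comm]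

theorem hausdorffEDist_kLiminf_le
    (hG : ∀ ε > 0, ∃ U ∈ l, ∀ s ∈ U, ∀ s' ∈ U, hausdorffEDist (G s) (G s') ≤ ε)
    {U : Set ℝ} (hU : U ∈ l) {θ : ℝ≥0∞}
    (hθ : ∀ s ∈ U, ∀ s' ∈ U, hausdorffEDist (G s) (G s') ≤ θ) {s : ℝ} (hs : s ∈ U) :
    hausdorffEDist (G s) (kLiminf l G) ≤ θ := by
  refine ge_of_tendsto (by simpa using (tendsto_hausdorffEDist_kLiminf hG).const_add θ) ?_
  filter_upwards [hU] with s' hs'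
  exact hausdorffEDist_triangle.trans (add_le_add (hθ s hs s' hs') le_rfl)

end HausdorffLimit

section Normed

variable {E : Type*} [SeminormedAddCommGroup E]

theorem hausdorffEDist_le_of_subset_add_closedBall {B C : Set E} {r : ℝ}
    (hBC : B ⊆ C + closedBall 0 r) (hCB : C ⊆ B + closedBall 0 r) :
    hausdorffEDist B C ≤ ENNReal.ofReal r := by
  have key : ∀ {B C : Set E}, B ⊆ C + closedBall 0 r →
      ∀ x ∈ B, ∃ y ∈ C, edist x y ≤ ENNReal.ofReal r := by
    intro B C h x hx
    obtain ⟨y, hy, z, hz, rfl⟩ := h hx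
    refine ⟨y, hy, ?_⟩
    rw [edist_dist, dist_self_add_left]
    exact ENNReal.ofReal_le_ofReal (mem_closedBall_zero_iff.1 hz)
  exact hausdorffEDist_le_of_mem_edist (key hBC) (key hCB)

theorem dist_add_sub_self_left (x y z : E) : dist x (x + (y - z)) = dist y z := by
  rw [dist_comm, dist_self_add_left, dist_eq_norm]

theorem dist_add_sub_right (x y z : E) : dist (x + (y - z)) y = dist x z := by
  rw [dist_eq_norm, dist_eq_norm]
  congr 1
  abel

end Normed

theorem eventually_forall_Icc_dist_le {X : Type*} [PseudoMetricSpace X] {f : ℝ → X} {S : ℝ}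
    (hf : ContinuousWithinAt f (Ici S) S) {ρ : ℝ} (hρ : 0 < ρ) :
    ∀ᶠ s₀ in 𝓝[>] S, ∀ u ∈ Icc S s₀, dist (f u) (f S) ≤ ρ := by
  obtain ⟨s₁, hs₁, hsub⟩ :=
    mem_nhdsGE_iff_exists_Ico_subset.1 (Metric.tendsto_nhds.1 hf ρ hρ)
  filter_upwards [Ioo_mem_nhdsGT hs₁] with s₀ hs₀ u hu
  exact (hsub ⟨hu.1, hu.2.trans_lt hs₀.2⟩).le

namespace MvPartition

variable {S t : ℝ}

theorem pts_mono (P : MvPartition S t) {i j : ℕ} (hij : i ≤ j) (hj : j ≤ P.N) :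
    P.pts i ≤ P.pts j := by
  induction j, hij using Nat.le_induction with
  | base => exact le_rfl
  | succ j _ ih => exact (ih (by omega)).trans (P.mono j (by omega)).le

theorem start_lt_pts_one (P : MvPartition S t) : S < P.pts 1 := by
  simpa [P.first] using P.mono 0 P.hN

theorem pts_le_last (P : MvPartition S t) {i : ℕ} (hi : i ≤ P.N) : P.pts i ≤ t := by
  simpa [P.last] using P.pts_mono hi le_rfl

theorem pts_one_sub_le (P : MvPartition S t) {ε : ℝ} (hP : P.diamLE ε) :
    P.pts 1 - S ≤ ε := by
  simpa [P.first] using hP 0 P.hN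

theorem diamLE.mono {P : MvPartition S t} {ε ε' : ℝ} (hP : P.diamLE ε) (h : ε ≤ ε') :
    P.diamLE ε' :=
  fun i hi => (hP i hi).trans h

def single (h : S < t) : MvPartition S t where
  N := 1
  pts i := if i = 0 then S else t
  hN := one_pos
  first := rfl
  last := rfl
  mono i hi := by obtain rfl : i = 0 := by omega
                  simpa using h

theorem diamLE_single (h : S < t) {ε : ℝ} (hε : t - S ≤ ε) : (single h).diamLE ε := by
  intro i hi
  obtain rfl : i = 0 := by simpa [single] using hi
  simpa [single] using hε

def uniform (h : S < t) {ε : ℝ} (hε : 0 < ε) : MvPartition S t where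
  N := ⌈(t - S) / ε⌉₊
  pts i := S + i * ((t - S) / ⌈(t - S) / ε⌉₊)
  hN := Nat.ceil_pos.2 (div_pos (sub_pos.2 h) hε)
  first := by simp
  last := by
    have : (⌈(t - S) / ε⌉₊ : ℝ) ≠ 0 := by
      exact_mod_cast (Nat.ceil_pos.2 (div_pos (sub_pos.2 h) hε)).ne'
    field_simp
    ring
  mono i _ := by
    have : 0 < (t - S) / ⌈(t - S) / ε⌉₊ :=
      div_pos (sub_pos.2 h) (by exact_mod_cast Nat.ceil_pos.2 (div_pos (sub_pos.2 h) hε))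
    push_cast
    nlinarith

theorem diamLE_uniform (h : S < t) {ε : ℝ} (hε : 0 < ε) : (uniform h hε).diamLE ε := by
  intro i _
  have hN : (0 : ℝ) < ⌈(t - S) / ε⌉₊ := by
    exact_mod_cast Nat.ceil_pos.2 (div_pos (sub_pos.2 h) hε)
  have hle : (t - S) / ε ≤ ⌈(t - S) / ε⌉₊ := Nat.le_ceil _
  simp only [uniform]
  push_cast
  rw [add_mul, one_mul, add_sub_add_left_eq_sub, add_sub_cancel_left, div_le_iff₀ hN]
  rwa [div_le_iff₀ hε, mul_comm] at hle

def concat {m : ℝ} (P : MvPartition S m) (Q : MvPartition m t) : MvPartition S t where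
  N := P.N + Q.N
  pts i := if i ≤ P.N then P.pts i else Q.pts (i - P.N)
  hN := Nat.add_pos_left P.hN _
  first := by simp [P.first]
  last := by
    rw [if_neg (by have := Q.hN; omega), Nat.add_sub_cancel_left, Q.last]
  mono i hi := by
    rcases lt_trichotomy i P.N with h | rfl | h
    · rw [if_pos h.le, if_pos (show i + 1 ≤ P.N from h)]
      exact P.mono i h
    · rw [if_pos le_rfl, if_neg (by omega), Nat.add_sub_cancel_left, P.last]
      simpa [Q.first] using Q.mono 0 Q.hN
    · rw [if_neg (by omega), if_neg (by omega), Nat.sub_add_comm h.le]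
      exact Q.mono _ (by omega)

theorem concat_pts_left {m : ℝ} (P : MvPartition S m) (Q : MvPartition m t) {i : ℕ}
    (hi : i ≤ P.N) : (P.concat Q).pts i = P.pts i := if_pos hi

theorem concat_pts_right {m : ℝ} (P : MvPartition S m) (Q : MvPartition m t) (j : ℕ) :
    (P.concat Q).pts (P.N + j) = Q.pts j := by
  rcases j.eq_zero_or_pos with rfl | hj
  · simp [concat, P.last, Q.first]
  · simp [concat, show ¬ P.N + j ≤ P.N by omega]

theorem diamLE_concat {m ε : ℝ} {P : MvPartition S m} {Q : MvPartition m t}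
    (hP : P.diamLE ε) (hQ : Q.diamLE ε) : (P.concat Q).diamLE ε := by
  intro i hi
  rcases lt_or_ge i P.N with h | h
  · rw [concat_pts_left P Q h.le, concat_pts_left P Q h]
    exact hP i h
  · obtain ⟨j, rfl⟩ := Nat.exists_eq_add_of_le h
    rw [add_assoc, concat_pts_right, concat_pts_right]
    exact hQ j (by simp only [concat] at hi; omega)

def insertAfterStart (P : MvPartition S t) {s : ℝ} (h₀ : S < s) (h₁ : s < P.pts 1) :
    MvPartition S t where
  N := P.N + 1
  pts
    | 0 => S
    | 1 => s
    | j + 2 => P.pts (j + 1)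
  hN := Nat.succ_pos _
  first := rfl
  last := by
    obtain ⟨m, hm⟩ := Nat.exists_eq_add_of_lt P.hN
    simp only [zero_add] at hm
    simp only [hm]
    exact hm ▸ P.last
  mono
    | 0, _ => h₀
    | 1, _ => h₁
    | j + 2, hj => P.mono (j + 1) (by omega)

theorem diamLE_insertAfterStart {P : MvPartition S t} {s ε : ℝ} (h₀ : S < s)
    (h₁ : s < P.pts 1) (hP : P.diamLE ε) : (P.insertAfterStart h₀ h₁).diamLE ε
  | 0, _ => by have := P.pts_one_sub_le hP; simp only [insertAfterStart]; linarith
  | 1, _ => by have := P.pts_one_sub_le hP; simp only [insertAfterStart]; linarith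
  | j + 2, hj => hP (j + 1) (by simp only [insertAfterStart] at hj; omega)

end MvPartition

section Variation

variable {n k : ℕ}

def mvIncrement (F : ℝ → En n → En k → Set (En n)) (xbar : ℝ → En n) (A : Set (En k))
    (δ s s' : ℝ) : ℝ≥0∞ :=
  ⨆ x ∈ xbar '' Icc s s' + closedBall (0 : En n) δ, ⨆ a ∈ A,
    hausdorffEDist (F s' x a) (F s x a)

def mvTailSum (F : ℝ → En n → En k → Set (En n)) (xbar : ℝ → En n) (A : Set (En k))
    (δ : ℝ) {S t : ℝ} (P : MvPartition S t) : ℝ≥0∞ :=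
  ∑ i ∈ Finset.range (P.N - 1), mvIncrement F xbar A δ (P.pts (i + 1)) (P.pts (i + 2))

variable {F G : ℝ → En n → En k → Set (En n)} {xbar : ℝ → En n} {A : Set (En k)}
  {δ ε S T t : ℝ}

theorem mem_image_Icc_add_closedBall {s s' : ℝ} {x : En n} :
    x ∈ xbar '' Icc s s' + closedBall (0 : En n) δ ↔
      ∃ u ∈ Icc s s', dist x (xbar u) ≤ δ := by
  simp only [Set.mem_add, mem_image, mem_closedBall_zero_iff]
  constructor
  · rintro ⟨_, ⟨u, hu, rfl⟩, z, hz, rfl⟩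
    exact ⟨u, hu, by rwa [dist_eq_norm, add_sub_cancel_left]⟩
  · rintro ⟨u, hu, hxu⟩
    exact ⟨xbar u, ⟨u, hu, rfl⟩, x - xbar u, by rwa [← dist_eq_norm], add_sub_cancel _ _⟩

theorem hausdorffEDist_le_mvIncrement {s s' u : ℝ} (hu : u ∈ Icc s s') {x : En n}
    (hx : dist x (xbar u) ≤ δ) {a : En k} (ha : a ∈ A) :
    hausdorffEDist (F s' x a) (F s x a) ≤ mvIncrement F xbar A δ s s' :=
  le_iSup₂_of_le x (mem_image_Icc_add_closedBall.2 ⟨u, hu, hx⟩) (le_iSup₂_of_le a ha le_rfl)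

theorem mvIncrement_le {s s' : ℝ} {c : ℝ≥0∞}
    (h : ∀ u ∈ Icc s s', ∀ x, dist x (xbar u) ≤ δ → ∀ a ∈ A,
      hausdorffEDist (F s' x a) (F s x a) ≤ c) :
    mvIncrement F xbar A δ s s' ≤ c :=
  iSup₂_le fun x hx => iSup₂_le fun a ha =>
    let ⟨u, hu, hxu⟩ := mem_image_Icc_add_closedBall.1 hx
    h u hu x hxu a ha

theorem mvIncrement_mono_delta {δ' s s' : ℝ} (h : δ ≤ δ') :
    mvIncrement F xbar A δ s s' ≤ mvIncrement F xbar A δ' s s' :=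
  mvIncrement_le fun _ hu _ hx _ ha => hausdorffEDist_le_mvIncrement hu (hx.trans h) ha

theorem mvSum_eq_sum (P : MvPartition S t) :
    mvSum F xbar A δ P =
      ∑ i ∈ Finset.range P.N, mvIncrement F xbar A δ (P.pts i) (P.pts (i + 1)) :=
  rfl

theorem mvSum_single (h : S < t) :
    mvSum F xbar A δ (MvPartition.single h) = mvIncrement F xbar A δ S t := by
  simp [mvSum_eq_sum, MvPartition.single]

theorem mvSum_concat {m : ℝ} (P : MvPartition S m) (Q : MvPartition m t) :
    mvSum F xbar A δ (P.concat Q) = mvSum F xbar A δ P + mvSum F xbar A δ Q := by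
  rw [mvSum_eq_sum, mvSum_eq_sum, mvSum_eq_sum, show (P.concat Q).N = P.N + Q.N from rfl,
    Finset.sum_range_add]
  congr 1
  · refine Finset.sum_congr rfl fun i hi => ?_
    have hi : i < P.N := Finset.mem_range.1 hi
    rw [MvPartition.concat_pts_left P Q hi.le, MvPartition.concat_pts_left P Q hi]
  · refine Finset.sum_congr rfl fun j _ => ?_
    rw [add_assoc, MvPartition.concat_pts_right, MvPartition.concat_pts_right]

theorem mvSum_eq_add_mvTailSum (P : MvPartition S t) :
    mvSum F xbar A δ P = mvIncrement F xbar A δ S (P.pts 1) + mvTailSum F xbar A δ P := by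
  obtain ⟨m, hm⟩ := Nat.exists_eq_add_of_lt P.hN
  rw [mvSum_eq_sum, mvTailSum, zero_add] at *
  rw [hm, Finset.sum_range_succ', P.first, add_comm, Nat.add_sub_cancel]

theorem mvSum_insertAfterStart (P : MvPartition S t) {s : ℝ} (h₀ : S < s) (h₁ : s < P.pts 1) :
    mvSum F xbar A δ (P.insertAfterStart h₀ h₁) = mvIncrement F xbar A δ S s +
      mvIncrement F xbar A δ s (P.pts 1) + mvTailSum F xbar A δ P := by
  obtain ⟨m, hm⟩ := Nat.exists_eq_add_of_lt P.hN
  rw [zero_add] at hm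
  rw [mvSum_eq_sum, mvTailSum, hm, Nat.add_sub_cancel]
  simp only [MvPartition.insertAfterStart, hm, Finset.sum_range_succ']
  ring

theorem le_mvEtaEps (P : MvPartition S t) (hP : P.diamLE ε) :
    mvSum F xbar A δ P ≤ mvEtaEps F xbar A δ ε S t :=
  le_iSup₂_of_le P hP le_rfl

theorem mvEtaEps_le {c : ℝ≥0∞}
    (h : ∀ P : MvPartition S t, P.diamLE ε → mvSum F xbar A δ P ≤ c) :
    mvEtaEps F xbar A δ ε S t ≤ c :=
  iSup₂_le h

theorem mvEtaEps_add_le (hSt : S < t) (hε : 0 < ε) {c C : ℝ≥0∞}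
    (h : ∀ P : MvPartition S t, P.diamLE ε → mvSum F xbar A δ P + c ≤ C) :
    mvEtaEps F xbar A δ ε S t + c ≤ C := by
  have : Nonempty {P : MvPartition S t // P.diamLE ε} :=
    ⟨⟨.uniform hSt hε, MvPartition.diamLE_uniform hSt hε⟩⟩
  rw [mvEtaEps, iSup_subtype', ENNReal.iSup_add]
  exact iSup_le fun P => h P.1 P.2

theorem mvEtaEps_mono_delta {δ' : ℝ} (h : δ ≤ δ') :
    mvEtaEps F xbar A δ ε S t ≤ mvEtaEps F xbar A δ' ε S t :=
  mvEtaEps_le fun P hP => (Finset.sum_le_sum fun _ _ => mvIncrement_mono_delta h).trans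
    (le_mvEtaEps P hP)

theorem mvEtaEps_monotone (hε : 0 < ε) : Monotone (mvEtaEps F xbar A δ ε S) := by
  intro s s' hss'
  refine mvEtaEps_le fun P hP => ?_
  rcases hss'.eq_or_lt with rfl | hlt
  · exact le_mvEtaEps P hP
  · calc mvSum F xbar A δ P
        ≤ mvSum F xbar A δ (P.concat (.uniform hlt hε)) := by
          rw [mvSum_concat]; exact le_self_add
      _ ≤ _ := le_mvEtaEps _ (MvPartition.diamLE_concat hP (MvPartition.diamLE_uniform hlt hε))

theorem mvIncrement_add_mvEtaEps_le {s s' : ℝ} (hs : S < s) (hss' : s < s')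
    (hε : s' - s ≤ ε) :
    mvIncrement F xbar A δ s s' + mvEtaEps F xbar A δ ε S s ≤
      mvEtaEps F xbar A δ ε S s' := by
  rw [add_comm]
  refine mvEtaEps_add_le hs ((sub_pos.2 hss').trans_le hε) fun P hP => ?_
  have := le_mvEtaEps (P.concat (.single hss'))
    (MvPartition.diamLE_concat hP (MvPartition.diamLE_single hss' hε)) (F := F) (xbar := xbar)
    (A := A) (δ := δ)
  rwa [mvSum_concat, mvSum_single] at this

theorem mvEtaDelta_le_mvEtaEps (hε : 0 < ε) :
    mvEtaDelta F xbar A δ S t ≤ mvEtaEps F xbar A δ ε S t :=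
  iInf₂_le ε hε

theorem mvEtaDelta_mono_delta {δ' : ℝ} (h : δ ≤ δ') :
    mvEtaDelta F xbar A δ S t ≤ mvEtaDelta F xbar A δ' S t :=
  iInf₂_mono fun _ _ => mvEtaEps_mono_delta h

theorem mvEtaDelta_monotone : Monotone (mvEtaDelta F xbar A δ S) :=
  fun _ _ h => iInf₂_mono fun _ hε => mvEtaEps_monotone hε h

theorem mvEtaDelta_add_le_add (hSt : S < t) {c c' : ℝ≥0∞}
    (h : ∀ θ > (0 : ℝ≥0∞), ∀ ε > 0, ∃ ε' > 0, ∀ P : MvPartition S t, P.diamLE ε' →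
      ∃ Q : MvPartition S t, Q.diamLE ε ∧
        mvSum F xbar A δ P + c ≤ mvSum G xbar A δ Q + c' + θ) :
    mvEtaDelta F xbar A δ S t + c ≤ mvEtaDelta G xbar A δ S t + c' := by
  refine ENNReal.le_of_forall_pos_le_add fun θ hθ _ => ?_
  have key : ∀ ε > 0,
      mvEtaDelta F xbar A δ S t + c ≤ mvEtaEps G xbar A δ ε S t + c' + θ := by
    intro ε hε
    obtain ⟨ε', hε', hPQ⟩ := h θ (by exact_mod_cast hθ) ε hε
    refine (add_le_add (mvEtaDelta_le_mvEtaEps hε') le_rfl).trans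
      (mvEtaEps_add_le hSt hε' fun P hP => ?_)
    obtain ⟨Q, hQ, hle⟩ := hPQ P hP
    exact hle.trans (add_le_add (add_le_add (le_mvEtaEps Q hQ) le_rfl) le_rfl)
  calc _ ≤ ⨅ ε > 0, mvEtaEps G xbar A δ ε S t + c' + θ := le_iInf₂ key
    _ = _ := by simp only [mvEtaDelta, ENNReal.iInf_add]

theorem mvEta_le_mvEtaDelta (hδ : 0 < δ) : mvEta F xbar A S t ≤ mvEtaDelta F xbar A δ S t :=
  iInf₂_le δ hδ

theorem mvEta_eq_iInf_Ioo {δbar : ℝ} (hδbar : 0 < δbar) :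
    mvEta F xbar A S t = ⨅ d : Ioo 0 δbar, mvEtaDelta F xbar A d S t := by
  refine le_antisymm (le_iInf fun d => mvEta_le_mvEtaDelta d.2.1) (le_iInf₂ fun d hd => ?_)
  have hd' : min d (δbar / 2) ∈ Ioo 0 δbar := ⟨lt_min hd (by linarith), by
    have := min_le_right d (δbar / 2); linarith⟩
  exact (iInf_le _ ⟨_, hd'⟩).trans (mvEtaDelta_mono_delta (min_le_left _ _))

theorem eventually_mvIncrement_le (hST : S < T) (hε : 0 < ε)
    (hfin : mvEtaEps F xbar A δ ε S T ≠ ⊤) {θ : ℝ≥0∞} (hθ : 0 < θ) :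
    ∀ᶠ s₀ in 𝓝[>] S, ∀ s ∈ Ioc S s₀, ∀ s' ∈ Icc s s₀,
      mvIncrement F xbar A δ s s' ≤ θ := by
  set g := mvEtaEps F xbar A δ ε S
  -- `g s + mvIncrement s s' ≤ g s'`, and `g` is close to its right limit `L` at `S`.
  set L := ⨅ s ∈ Ioc S T, g s
  have hL : L ≠ ⊤ := ne_top_of_le_ne_top hfin (iInf₂_le T ⟨hST, le_rfl⟩)
  obtain ⟨s₁, hs₁, hgs₁⟩ : ∃ s₁ ∈ Ioc S T, g s₁ < L + θ := by
    simpa only [L, iInf_lt_iff, exists_prop] using ENNReal.lt_add_right hL hθ.ne'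
  filter_upwards [Ioc_mem_nhdsGT (lt_min hs₁.1 (lt_add_of_pos_right S hε))]
    with s₀ ⟨_, hs₀⟩ s ⟨hSs, hss₀⟩ s' ⟨hss', hs'₀⟩
  rw [le_min_iff] at hs₀
  rcases hss'.eq_or_lt with rfl | hlt
  · exact mvIncrement_le fun _ _ _ _ _ _ => by rw [hausdorffEDist_self]; exact bot_le
  have hsT : s ≤ T := by linarith [hs₁.2]
  have hgs : g s ≠ ⊤ := ne_top_of_le_ne_top hfin (mvEtaEps_monotone hε hsT)
  refine (ENNReal.add_le_add_iff_right hgs).1 ?_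
  calc mvIncrement F xbar A δ s s' + g s ≤ g s' :=
        mvIncrement_add_mvEtaEps_le hSs hlt (by linarith)
    _ ≤ g s₁ := mvEtaEps_monotone hε (hs'₀.trans hs₀.1)
    _ ≤ g s + θ := hgs₁.le.trans (add_le_add (iInf₂_le s ⟨hSs, hsT⟩) le_rfl)
    _ = θ + g s := add_comm _ _

end Variation

section Endpoint

variable {n k : ℕ}

def UniformlyHausdorffContinuousNear (F : ℝ → En n → En k → Set (En n)) (xbar : ℝ → En n)
    (A : Set (En k)) (S T r : ℝ) : Prop :=
  ∀ θ > (0 : ℝ≥0∞), ∃ ρ > 0, ∀ τ ∈ Icc S T, ∀ x ∈ closedBall (xbar τ) r,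
    ∀ x' ∈ closedBall (xbar τ) r, dist x x' ≤ ρ → ∀ a ∈ A,
      hausdorffEDist (F τ x a) (F τ x' a) ≤ θ

def TendstoRightLimUniformlyNear (F : ℝ → En n → En k → Set (En n)) (xbar : ℝ → En n)
    (A : Set (En k)) (S T r : ℝ) : Prop :=
  ∀ θ > (0 : ℝ≥0∞), ∀ᶠ s₀ in 𝓝[>] S, ∀ s ∈ Ioc S s₀, ∀ x ∈ closedBall (xbar S) r,
    ∀ a ∈ A, hausdorffEDist (F s x a) (rightLim F T S x a) ≤ θ

def startJump (F : ℝ → En n → En k → Set (En n)) (xbar : ℝ → En n) (A : Set (En k))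
    (S T δ : ℝ) : ℝ≥0∞ :=
  ⨆ x ∈ closedBall (xbar S) δ, ⨆ a ∈ A, hausdorffEDist (F S x a) (rightLim F T S x a)

variable {F : ℝ → En n → En k → Set (En n)} {xbar : ℝ → En n} {A : Set (En k)}
  {S T δbar δ r t : ℝ}

theorem HypC2.uniformlyHausdorffContinuousNear (h : HypC2 F xbar A S T δbar) :
    UniformlyHausdorffContinuousNear F xbar A S T δbar := by
  obtain ⟨γ, -, hγ, hsub⟩ := h
  intro θ hθ
  have hγθ : ∀ᶠ d in 𝓝[>] (0 : ℝ), ENNReal.ofReal (γ d) < θ := by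
    have := ENNReal.tendsto_ofReal hγ
    rw [ENNReal.ofReal_zero] at this
    exact this.eventually_lt_const hθ
  obtain ⟨ρ, hρ, hρθ⟩ := mem_nhdsGT_iff_exists_Ioc_subset.1 hγθ
  refine ⟨ρ, hρ, fun τ hτ x hx x' hx' hxx' a ha => ?_⟩
  rcases eq_or_ne x x' with rfl | hne
  · rw [hausdorffEDist_self]; exact bot_le
  have hd : ‖x - x'‖ + ‖a - a‖ ∈ Ioc 0 ρ := by
    rw [sub_self, norm_zero, add_zero, ← dist_eq_norm]
    exact ⟨dist_pos.2 hne, hxx'⟩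
  refine (hausdorffEDist_le_of_subset_add_closedBall (hsub τ hτ x hx x' hx' a ha a ha) ?_).trans
    (hρθ hd).le
  simpa only [norm_sub_rev] using hsub τ hτ x' hx' x hx a ha a ha

theorem Ftilde_of_ne {τ : ℝ} (hS : τ ≠ S) (hT : τ ≠ T) :
    Ftilde F xbar S T δbar τ = F τ := by
  funext x a
  simp [Ftilde, hS, hT]

theorem Ftilde_start {x : En n} (hx : dist x (xbar S) < δbar) (a : En k) :
    Ftilde F xbar S T δbar S x a = rightLim F T S x a := by
  simp [Ftilde, ← dist_eq_norm, hx]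

theorem mvTailSum_Ftilde (htT : t < T) (P : MvPartition S t) :
    mvTailSum (Ftilde F xbar S T δbar) xbar A δ P = mvTailSum F xbar A δ P := by
  refine Finset.sum_congr rfl fun i hi => ?_
  have hi : i + 2 ≤ P.N := by have := Finset.mem_range.1 hi; omega
  have hpts : ∀ j, 1 ≤ j → j ≤ P.N → P.pts j ≠ S ∧ P.pts j ≠ T := fun j h₁ h₂ =>
    ⟨(P.start_lt_pts_one.trans_le (P.pts_mono h₁ h₂)).ne',
      ((P.pts_le_last h₂).trans_lt htT).ne⟩
  simp only [mvIncrement, Ftilde_of_ne (hpts (i + 1) (by omega) (by omega)).1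
    (hpts (i + 1) (by omega) (by omega)).2, Ftilde_of_ne (hpts (i + 2) (by omega) hi).1
    (hpts (i + 2) (by omega) hi).2]

theorem eventually_hausdorffEDist_le (hST : S < T) (hx : ContinuousWithinAt xbar (Ici S) S)
    {ε : ℝ} (hε : 0 < ε) (hfin : mvEtaEps F xbar A δbar ε S T ≠ ⊤) (hr : r < δbar)
    {θ : ℝ≥0∞} (hθ : 0 < θ) :
    ∀ᶠ s₀ in 𝓝[>] S, ∀ s ∈ Ioc S s₀, ∀ s' ∈ Ioc S s₀, ∀ x ∈ closedBall (xbar S) r,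
      ∀ a ∈ A, hausdorffEDist (F s x a) (F s' x a) ≤ θ := by
  filter_upwards [eventually_mvIncrement_le hST hε hfin hθ,
    eventually_forall_Icc_dist_le hx (sub_pos.2 hr)] with s₀ hincr hdist
  have key : ∀ s ∈ Ioc S s₀, ∀ s' ∈ Icc s s₀, ∀ x ∈ closedBall (xbar S) r,
      ∀ a ∈ A, hausdorffEDist (F s' x a) (F s x a) ≤ θ := by
    intro s hs s' hs' x hx a ha
    refine (hausdorffEDist_le_mvIncrement (left_mem_Icc.2 hs'.1) ?_ ha).trans (hincr s hs s' hs')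
    calc dist x (xbar s) ≤ dist x (xbar S) + dist (xbar s) (xbar S) := dist_triangle_right _ _ _
      _ ≤ r + (δbar - r) := add_le_add hx (hdist s ⟨hs.1.le, hs.2⟩)
      _ = δbar := by ring
  intro s hs s' hs' x hx a ha
  rcases le_total s s' with h | h
  · rw [hausdorffEDist_comm]
    exact key s hs s' ⟨h, hs'.2⟩ x hx a ha
  · exact key s' hs' s ⟨h, hs.2⟩ x hx a ha

theorem tendstoRightLimUniformlyNear (hST : S < T) (hx : ContinuousWithinAt xbar (Ici S) S)
    {ε : ℝ} (hε : 0 < ε) (hfin : mvEtaEps F xbar A δbar ε S T ≠ ⊤) (hr : r < δbar) :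
    TendstoRightLimUniformlyNear F xbar A S T r := by
  have hcauchy := fun θ (hθ : 0 < θ) => eventually_hausdorffEDist_le hST hx hε hfin hr hθ
  intro θ hθ
  filter_upwards [hcauchy θ hθ, self_mem_nhdsWithin] with s₀ hs₀ hSs₀ s hs x hx a ha
  rw [rightLim, nhdsWithin_Ioc_eq_nhdsGT hST]
  refine hausdorffEDist_kLiminf_le (fun ε hε => ?_) (Ioc_mem_nhdsGT hSs₀)
    (fun s hs s' hs' => hs₀ s hs s' hs' x hx a ha) hs
  obtain ⟨s₁, hs₁, hSs₁⟩ := ((hcauchy ε hε).and self_mem_nhdsWithin).exists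
  exact ⟨Ioc S s₁, Ioc_mem_nhdsGT hSs₁, fun s hs s' hs' => hs₁ s hs s' hs' x hx a ha⟩

theorem hausdorffEDist_le_startJump {x : En n} (hx : x ∈ closedBall (xbar S) δ) {a : En k}
    (ha : a ∈ A) :
    hausdorffEDist (F S x a) (rightLim F T S x a) ≤ startJump F xbar A S T δ :=
  le_iSup₂_of_le x hx (le_iSup₂_of_le a ha le_rfl)

theorem startJump_le {c : ℝ≥0∞}
    (h : ∀ x ∈ closedBall (xbar S) δ, ∀ a ∈ A,
      hausdorffEDist (F S x a) (rightLim F T S x a) ≤ c) :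
    startJump F xbar A S T δ ≤ c :=
  iSup₂_le fun x hx => iSup₂_le fun a ha => h x hx a ha

theorem startJump_mono {δ' : ℝ} (h : δ ≤ δ') :
    startJump F xbar A S T δ ≤ startJump F xbar A S T δ' :=
  startJump_le fun _ hx _ ha => hausdorffEDist_le_startJump (closedBall_subset_closedBall h hx) ha

theorem exists_hausdorffEDist_rightLim_le (hST : S < T) (hx : ContinuousWithinAt xbar (Ici S) S)
    (hC : UniformlyHausdorffContinuousNear F xbar A S T δbar) (hr : r < δbar)
    (hlim : TendstoRightLimUniformlyNear F xbar A S T r) {θ : ℝ≥0∞} (hθ : 0 < θ) :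
    ∃ ρ > 0, ∀ x ∈ closedBall (xbar S) r, ∀ x' ∈ closedBall (xbar S) r,
      dist x x' ≤ ρ → ∀ a ∈ A, hausdorffEDist (rightLim F T S x a) (rightLim F T S x' a) ≤ θ := by
  have hθ3 : 0 < θ / 3 := ENNReal.div_pos hθ.ne' (by norm_num)
  obtain ⟨ρ, hρ, hCρ⟩ := hC (θ / 3) hθ3
  obtain ⟨s, ⟨⟨hlims, hdist⟩, hsT⟩, hSs⟩ :=
    ((((hlim _ hθ3).and (eventually_forall_Icc_dist_le hx (sub_pos.2 hr))).and
      (Ioo_mem_nhdsGT hST)).and self_mem_nhdsWithin).exists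
  have hball : ∀ y ∈ closedBall (xbar S) r, y ∈ closedBall (xbar s) δbar := fun y hy =>
    calc dist y (xbar s) ≤ dist y (xbar S) + dist (xbar s) (xbar S) := dist_triangle_right _ _ _
      _ ≤ r + (δbar - r) := add_le_add hy (hdist s ⟨le_of_lt hSs, le_rfl⟩)
      _ = δbar := by ring
  refine ⟨ρ, hρ, fun x hx x' hx' hxx' a ha => ?_⟩
  calc hausdorffEDist (rightLim F T S x a) (rightLim F T S x' a)
      ≤ hausdorffEDist (rightLim F T S x a) (F s x a) + (hausdorffEDist (F s x a) (F s x' a) +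
          hausdorffEDist (F s x' a) (rightLim F T S x' a)) :=
        hausdorffEDist_triangle.trans (add_le_add le_rfl hausdorffEDist_triangle)
    _ ≤ θ / 3 + (θ / 3 + θ / 3) := by
        gcongr
        · rw [hausdorffEDist_comm]
          exact hlims s ⟨hSs, le_rfl⟩ x hx a ha
        · exact hCρ s (Ioo_subset_Icc_self hsT) x (hball x hx) x' (hball x' hx') hxx' a ha
        · exact hlims s ⟨hSs, le_rfl⟩ x' hx' a ha
    _ = θ := by rw [← add_assoc, ENNReal.add_thirds]

theorem exists_hausdorffEDist_le_startJump_add (hST : S < T)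
    (hx : ContinuousWithinAt xbar (Ici S) S)
    (hC : UniformlyHausdorffContinuousNear F xbar A S T δbar) (hr : r < δbar)
    (hlim : TendstoRightLimUniformlyNear F xbar A S T r) (hδr : δ ≤ r) {θ : ℝ≥0∞}
    (hθ : 0 < θ) :
    ∃ ρ > 0, ∀ x ∈ closedBall (xbar S) r, ∀ x' ∈ closedBall (xbar S) δ, dist x x' ≤ ρ →
      ∀ a ∈ A, hausdorffEDist (F S x a) (rightLim F T S x a) ≤
        startJump F xbar A S T δ + θ := by
  have hθ2 : 0 < θ / 2 := ENNReal.half_pos hθ.ne'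
  obtain ⟨ρ₁, hρ₁, hCρ⟩ := hC (θ / 2) hθ2
  obtain ⟨ρ₂, hρ₂, hlimρ⟩ := exists_hausdorffEDist_rightLim_le hST hx hC hr hlim hθ2
  refine ⟨min ρ₁ ρ₂, lt_min hρ₁ hρ₂, fun x hx x' hx' hxx' a ha => ?_⟩
  have hx'r : x' ∈ closedBall (xbar S) r := closedBall_subset_closedBall hδr hx'
  have hS : S ∈ Icc S T := left_mem_Icc.2 hST.le
  calc hausdorffEDist (F S x a) (rightLim F T S x a)
      ≤ hausdorffEDist (F S x a) (F S x' a) + (hausdorffEDist (F S x' a) (rightLim F T S x' a) +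
          hausdorffEDist (rightLim F T S x' a) (rightLim F T S x a)) :=
        hausdorffEDist_triangle.trans (add_le_add le_rfl hausdorffEDist_triangle)
    _ ≤ θ / 2 + (startJump F xbar A S T δ + θ / 2) := by
        gcongr
        · exact hCρ S hS x (closedBall_subset_closedBall hr.le hx) x'
            (closedBall_subset_closedBall hr.le hx'r) (hxx'.trans (min_le_left _ _)) a ha
        · exact hausdorffEDist_le_startJump hx' ha
        · rw [dist_comm] at hxx'
          exact hlimρ x' hx'r x hx (hxx'.trans (min_le_right _ _)) a ha
    _ = startJump F xbar A S T δ + θ := by rw [add_left_comm, ENNReal.add_halves]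

theorem eventually_mvIncrement_le_Ftilde (hST : S < T) (hx : ContinuousWithinAt xbar (Ici S) S)
    (hC : UniformlyHausdorffContinuousNear F xbar A S T δbar)
    (hlim : ∀ r < δbar, TendstoRightLimUniformlyNear F xbar A S T r) (hδ : δ < δbar)
    {θ : ℝ≥0∞} (hθ : 0 < θ) :
    ∀ᶠ s₀ in 𝓝[>] S, ∀ t₁ ∈ Ioc S s₀, mvIncrement F xbar A δ S t₁ ≤
      mvIncrement (Ftilde F xbar S T δbar) xbar A δ S t₁ +
        (startJump F xbar A S T δ + θ) := by
  obtain ⟨r, hδr, hr⟩ := exists_between hδ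
  obtain ⟨ρ, hρ, hjump⟩ :=
    exists_hausdorffEDist_le_startJump_add hST hx hC hr (hlim r hr) hδr.le hθ
  filter_upwards [eventually_forall_Icc_dist_le hx (lt_min hρ (sub_pos.2 hδr)),
    Ioo_mem_nhdsGT hST] with s₀ hdist hs₀T t₁ ht₁
  refine mvIncrement_le fun u hu x hxu a ha => ?_
  have hu' := (hdist u ⟨hu.1, hu.2.trans ht₁.2⟩).trans (min_le_right _ _)
  have hxS : dist x (xbar S) ≤ r := by linarith [dist_triangle x (xbar u) (xbar S)]
  have hF : ∀ y, Ftilde F xbar S T δbar t₁ y a = F t₁ y a := fun y => by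
    rw [Ftilde_of_ne ht₁.1.ne' (ht₁.2.trans_lt hs₀T.2).ne]
  set x' := x + (xbar S - xbar u)
  have hx' : x' ∈ closedBall (xbar S) δ := by
    rw [mem_closedBall, dist_add_sub_right]
    exact hxu
  have hxx' : dist x x' ≤ ρ := by
    rw [dist_add_sub_self_left, dist_comm]
    exact (hdist u ⟨hu.1, hu.2.trans ht₁.2⟩).trans (min_le_left _ _)
  calc hausdorffEDist (F t₁ x a) (F S x a)
      ≤ hausdorffEDist (F t₁ x a) (rightLim F T S x a) +
          hausdorffEDist (rightLim F T S x a) (F S x a) := hausdorffEDist_triangle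
    _ ≤ _ := by
        gcongr
        · have := hausdorffEDist_le_mvIncrement (F := Ftilde F xbar S T δbar) hu hxu ha
          rwa [hF, Ftilde_start (by linarith)] at this
        · rw [hausdorffEDist_comm]
          exact hjump x hxS x' hx' hxx' a ha
theorem eventually_startJump_le (hlim : TendstoRightLimUniformlyNear F xbar A S T δ)
    {θ : ℝ≥0∞} (hθ : 0 < θ) :
    ∀ᶠ s₀ in 𝓝[>] S, ∀ s ∈ Ioc S s₀,
      startJump F xbar A S T δ ≤ mvIncrement F xbar A δ S s + θ := by
  filter_upwards [hlim θ hθ] with s₀ hs₀ s hs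
  refine startJump_le fun y hy b hb => ?_
  calc hausdorffEDist (F S y b) (rightLim F T S y b)
      ≤ hausdorffEDist (F S y b) (F s y b) + hausdorffEDist (F s y b) (rightLim F T S y b) :=
        hausdorffEDist_triangle
    _ ≤ _ := by
        gcongr
        · rw [hausdorffEDist_comm]
          exact hausdorffEDist_le_mvIncrement (left_mem_Icc.2 hs.1.le) hy hb
        · exact hs₀ s hs y hy b hb

theorem eventually_hausdorffEDist_le_mvIncrement_add (hST : S < T)
    (hx : ContinuousWithinAt xbar (Ici S) S)
    (hC : UniformlyHausdorffContinuousNear F xbar A S T δbar) (hδ : δ < δbar)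
    {θ : ℝ≥0∞} (hθ : 0 < θ) :
    ∀ᶠ s₀ in 𝓝[>] S, ∀ t₁ ∈ Ioc S s₀, ∀ s ∈ Ioc S t₁, ∀ u ∈ Icc S t₁, ∀ x,
      dist x (xbar u) ≤ δ → ∀ a ∈ A,
        hausdorffEDist (F t₁ x a) (F s x a) ≤ mvIncrement F xbar A δ s t₁ + θ := by
  have hθ2 : 0 < θ / 2 := ENNReal.half_pos hθ.ne'
  obtain ⟨ρ, hρ, hCρ⟩ := hC (θ / 2) hθ2
  set ρ' := min (ρ / 2) ((δbar - δ) / 2)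
  have hρ'ρ : ρ' ≤ ρ / 2 := min_le_left _ _
  have hρ'δ : ρ' ≤ (δbar - δ) / 2 := min_le_right _ _
  filter_upwards [eventually_forall_Icc_dist_le hx (lt_min (half_pos hρ) (half_pos (sub_pos.2 hδ))),
    Ioo_mem_nhdsGT hST] with s₀ hdist hs₀T t₁ ht₁ s hs u hu x hxu a ha
  have hT : ∀ v ∈ Icc S t₁, v ∈ Icc S T := fun v hv =>
    ⟨hv.1, hv.2.trans (ht₁.2.trans hs₀T.2.le)⟩
  have hd₂ : ∀ v ∈ Icc S t₁, ∀ w ∈ Icc S t₁, dist (xbar v) (xbar w) ≤ 2 * ρ' :=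
    fun v hv w hw => by
      linarith [dist_triangle_right (xbar v) (xbar w) (xbar S),
        hdist v ⟨hv.1, hv.2.trans ht₁.2⟩, hdist w ⟨hw.1, hw.2.trans ht₁.2⟩]
  have hsI : s ∈ Icc S t₁ := ⟨hs.1.le, hs.2⟩
  have ht₁I : t₁ ∈ Icc S t₁ := ⟨ht₁.1.le, le_rfl⟩
  have hxv : ∀ v ∈ Icc S t₁, dist x (xbar v) ≤ δbar := fun v hv => by
    linarith [dist_triangle x (xbar u) (xbar v), hd₂ u hu v hv]
  -- `x'` lies in the tube over `[s, t₁]` and, by continuity of `x̄` at `S`, close to `x`.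
  set x' := x + (xbar s - xbar u)
  have hx's : dist x' (xbar s) ≤ δ := by rw [dist_add_sub_right]; exact hxu
  have hx't₁ : dist x' (xbar t₁) ≤ δbar := by
    linarith [dist_triangle x' (xbar s) (xbar t₁), hd₂ s hsI t₁ ht₁I]
  have hxx' : dist x x' ≤ ρ := by
    rw [dist_add_sub_self_left]
    linarith [hd₂ s hsI u hu]
  calc hausdorffEDist (F t₁ x a) (F s x a)
      ≤ hausdorffEDist (F t₁ x a) (F t₁ x' a) + (hausdorffEDist (F t₁ x' a) (F s x' a) +
          hausdorffEDist (F s x' a) (F s x a)) :=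
        hausdorffEDist_triangle.trans (add_le_add le_rfl hausdorffEDist_triangle)
    _ ≤ θ / 2 + (mvIncrement F xbar A δ s t₁ + θ / 2) := by
        gcongr
        · exact hCρ t₁ (hT t₁ ht₁I) x (hxv t₁ ht₁I) x' hx't₁ hxx' a ha
        · exact hausdorffEDist_le_mvIncrement (left_mem_Icc.2 hs.2) hx's ha
        · rw [dist_comm] at hxx'
          exact hCρ s (hT s hsI) x' (hx's.trans hδ.le) x (hxv s hsI) hxx' a ha
    _ = mvIncrement F xbar A δ s t₁ + θ := by rw [add_left_comm, ENNReal.add_halves]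

theorem eventually_mvIncrement_Ftilde_le (hST : S < T) (hx : ContinuousWithinAt xbar (Ici S) S)
    (hC : UniformlyHausdorffContinuousNear F xbar A S T δbar)
    (hlim : ∀ r < δbar, TendstoRightLimUniformlyNear F xbar A S T r) (hδ : δ < δbar)
    {θ : ℝ≥0∞} (hθ : 0 < θ) :
    ∀ᶠ s₀ in 𝓝[>] S, ∀ t₁ ∈ Ioc S s₀, ∀ s ∈ Ioc S t₁,
      mvIncrement (Ftilde F xbar S T δbar) xbar A δ S t₁ ≤
        mvIncrement F xbar A δ s t₁ + θ := by
  obtain ⟨r, hδr, hr⟩ := exists_between hδ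
  have hθ2 : 0 < θ / 2 := ENNReal.half_pos hθ.ne'
  filter_upwards [eventually_hausdorffEDist_le_mvIncrement_add hST hx hC hδ hθ2,
    hlim r hr _ hθ2, eventually_forall_Icc_dist_le hx (sub_pos.2 hδr), Ioo_mem_nhdsGT hST]
    with s₀ hshift hlims hdist hs₀T t₁ ht₁ s hs
  refine mvIncrement_le fun u hu x hxu a ha => ?_
  have hxS : dist x (xbar S) ≤ r := by
    linarith [dist_triangle x (xbar u) (xbar S), hdist u ⟨hu.1, hu.2.trans ht₁.2⟩]
  rw [Ftilde_of_ne ht₁.1.ne' (ht₁.2.trans_lt hs₀T.2).ne, Ftilde_start (hxS.trans_lt hr)]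
  calc hausdorffEDist (F t₁ x a) (rightLim F T S x a)
      ≤ hausdorffEDist (F t₁ x a) (F s x a) + hausdorffEDist (F s x a) (rightLim F T S x a) :=
        hausdorffEDist_triangle
    _ ≤ mvIncrement F xbar A δ s t₁ + θ / 2 + θ / 2 :=
        add_le_add (hshift t₁ ht₁ s hs u hu x hxu a ha)
          (hlims s ⟨hs.1, hs.2.trans ht₁.2⟩ x hxS a ha)
    _ = mvIncrement F xbar A δ s t₁ + θ := by rw [add_assoc, ENNReal.add_halves]

theorem mvEtaDelta_le_mvEtaDelta_Ftilde_add_startJump (hx : ContinuousWithinAt xbar (Ici S) S)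
    (hC : UniformlyHausdorffContinuousNear F xbar A S T δbar)
    (hlim : ∀ r < δbar, TendstoRightLimUniformlyNear F xbar A S T r) (hδ : δ < δbar)
    (ht : t ∈ Ioo S T) :
    mvEtaDelta F xbar A δ S t ≤
      mvEtaDelta (Ftilde F xbar S T δbar) xbar A δ S t + startJump F xbar A S T δ := by
  have hST : S < T := ht.1.trans ht.2
  simpa using mvEtaDelta_add_le_add (c := 0) ht.1 fun θ hθ ε hε => by
    obtain ⟨s₀, hs₀, hSs₀⟩ :=
      ((eventually_mvIncrement_le_Ftilde hST hx hC hlim hδ hθ).and self_mem_nhdsWithin).exists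
    refine ⟨min ε (s₀ - S), lt_min hε (sub_pos.2 hSs₀),
      fun P hP => ⟨P, hP.mono (min_le_left _ _), ?_⟩⟩
    have ht₁ : P.pts 1 ∈ Ioc S s₀ :=
      ⟨P.start_lt_pts_one, by linarith [P.pts_one_sub_le hP, min_le_right ε (s₀ - S)]⟩
    rw [mvSum_eq_add_mvTailSum, mvSum_eq_add_mvTailSum, mvTailSum_Ftilde ht.2, add_zero]
    calc _ ≤ mvIncrement (Ftilde F xbar S T δbar) xbar A δ S (P.pts 1) +
          (startJump F xbar A S T δ + θ) + mvTailSum F xbar A δ P :=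
          add_le_add (hs₀ _ ht₁) le_rfl
      _ = _ := by ring

theorem mvEtaDelta_Ftilde_add_startJump_le (hx : ContinuousWithinAt xbar (Ici S) S)
    (hC : UniformlyHausdorffContinuousNear F xbar A S T δbar)
    (hlim : ∀ r < δbar, TendstoRightLimUniformlyNear F xbar A S T r) (hδ : δ < δbar)
    (ht : t ∈ Ioo S T) :
    mvEtaDelta (Ftilde F xbar S T δbar) xbar A δ S t + startJump F xbar A S T δ ≤
      mvEtaDelta F xbar A δ S t := by
  have hST : S < T := ht.1.trans ht.2
  simpa using mvEtaDelta_add_le_add (c' := 0) ht.1 fun θ hθ ε hε => by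
    have hθ2 : 0 < θ / 2 := ENNReal.half_pos hθ.ne'
    obtain ⟨s₀, ⟨hjump, hincr⟩, hSs₀⟩ :=
      (((eventually_startJump_le (hlim δ hδ) hθ2).and
        (eventually_mvIncrement_Ftilde_le hST hx hC hlim hδ hθ2)).and self_mem_nhdsWithin).exists
    refine ⟨min ε (s₀ - S), lt_min hε (sub_pos.2 hSs₀), fun P hP => ?_⟩
    set t₁ := P.pts 1
    have ht₁ : t₁ ∈ Ioc S s₀ :=
      ⟨P.start_lt_pts_one, by linarith [P.pts_one_sub_le hP, min_le_right ε (s₀ - S)]⟩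
    -- Refine `P` by a point `s` between `S` and `t₁`: `[S, s]` pays for `J(δ)`.
    obtain ⟨s, hs⟩ := exists_between ht₁.1
    refine ⟨P.insertAfterStart hs.1 hs.2,
      MvPartition.diamLE_insertAfterStart hs.1 hs.2 (hP.mono (min_le_left _ _)), ?_⟩
    rw [mvSum_eq_add_mvTailSum, mvTailSum_Ftilde ht.2, mvSum_insertAfterStart, add_zero]
    calc _ ≤ (mvIncrement F xbar A δ s t₁ + θ / 2) + mvTailSum F xbar A δ P +
          (mvIncrement F xbar A δ S s + θ / 2) :=
          add_le_add (add_le_add (hincr t₁ ht₁ s ⟨hs.1, hs.2.le⟩) le_rfl)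
            (hjump s ⟨hs.1, hs.2.le.trans ht₁.2⟩)
      _ = mvIncrement F xbar A δ S s + mvIncrement F xbar A δ s t₁ + mvTailSum F xbar A δ P +
          (θ / 2 + θ / 2) := by ring
      _ = _ := by rw [ENNReal.add_halves]

theorem mvEtaDelta_Ftilde_add_startJump (hx : ContinuousWithinAt xbar (Ici S) S)
    (hC : UniformlyHausdorffContinuousNear F xbar A S T δbar)
    (hlim : ∀ r < δbar, TendstoRightLimUniformlyNear F xbar A S T r) (hδ : δ < δbar)
    (ht : t ∈ Ioo S T) :
    mvEtaDelta (Ftilde F xbar S T δbar) xbar A δ S t + startJump F xbar A S T δ =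
      mvEtaDelta F xbar A δ S t :=
  le_antisymm (mvEtaDelta_Ftilde_add_startJump_le hx hC hlim hδ ht)
    (mvEtaDelta_le_mvEtaDelta_Ftilde_add_startJump hx hC hlim hδ ht)

theorem iInf_startJump (hST : S < T) (hx : ContinuousWithinAt xbar (Ici S) S)
    (hC : UniformlyHausdorffContinuousNear F xbar A S T δbar)
    (hlim : ∀ r < δbar, TendstoRightLimUniformlyNear F xbar A S T r) (hδbar : 0 < δbar) :
    ⨅ d : Ioo 0 δbar, startJump F xbar A S T d = startJump F xbar A S T 0 := by
  refine le_antisymm (ENNReal.le_of_forall_pos_le_add fun θ hθ _ => ?_)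
    (le_iInf fun d => startJump_mono d.2.1.le)
  obtain ⟨r, hr₀, hr⟩ := exists_between hδbar
  obtain ⟨ρ, hρ, hjump⟩ := exists_hausdorffEDist_le_startJump_add hST hx hC hr (hlim r hr)
    hr₀.le (ENNReal.coe_pos.2 hθ)
  refine iInf_le_of_le ⟨min ρ r, lt_min hρ hr₀, (min_le_right _ _).trans_lt hr⟩
    (startJump_le fun x hx a ha => ?_)
  exact hjump x (closedBall_subset_closedBall (min_le_right _ _) hx) (xbar S)
    (mem_closedBall_self le_rfl) ((mem_closedBall.1 hx).trans (min_le_left _ _)) a ha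

theorem mvEta_Ftilde_add_startJump (hx : ContinuousWithinAt xbar (Ici S) S)
    (hC : UniformlyHausdorffContinuousNear F xbar A S T δbar)
    (hlim : ∀ r < δbar, TendstoRightLimUniformlyNear F xbar A S T r) (hδbar : 0 < δbar)
    (ht : t ∈ Ioo S T) :
    mvEta (Ftilde F xbar S T δbar) xbar A S t + startJump F xbar A S T 0 =
      mvEta F xbar A S t := by
  rw [mvEta_eq_iInf_Ioo hδbar, mvEta_eq_iInf_Ioo hδbar,
    ← iInf_startJump (ht.1.trans ht.2) hx hC hlim hδbar, ENNReal.iInf_add_iInf]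
  · exact iInf_congr fun d => mvEtaDelta_Ftilde_add_startJump hx hC hlim d.2.2 ht
  · intro i j
    refine ⟨⟨min i j, lt_min i.2.1 j.2.1, (min_le_left _ _).trans_lt i.2.2⟩, ?_⟩
    exact add_le_add (mvEtaDelta_mono_delta (min_le_left _ _)) (startJump_mono (min_le_right _ _))

theorem mvEtaD_Ftilde_add_startJump (hx : ContinuousOn xbar (Icc S T))
    (hfin : mvEtaDelta F xbar A δbar S T < ⊤) (hC2 : HypC2 F xbar A S T δbar)
    (hδ : δ ∈ Ico 0 δbar) (ht : t ∈ Ioo S T) :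
    mvEtaD (Ftilde F xbar S T δbar) xbar A δ S t + startJump F xbar A S T δ =
      mvEtaD F xbar A δ S t := by
  have hST : S < T := ht.1.trans ht.2
  have hxS : ContinuousWithinAt xbar (Ici S) S :=
    (hx S (left_mem_Icc.2 hST.le)).mono_of_mem_nhdsWithin (Icc_mem_nhdsGE hST)
  obtain ⟨ε, hε, hεfin⟩ : ∃ ε > 0, mvEtaEps F xbar A δbar ε S T < ⊤ := by
    simpa [mvEtaDelta, iInf_lt_iff] using hfin
  have hlim : ∀ r < δbar, TendstoRightLimUniformlyNear F xbar A S T r := fun r hr =>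
    tendstoRightLimUniformlyNear hST hxS hε hεfin.ne hr
  have hC := hC2.uniformlyHausdorffContinuousNear
  rcases eq_or_ne δ 0 with rfl | hδ₀
  · rw [mvEtaD, mvEtaD, if_pos rfl, if_pos rfl]
    exact mvEta_Ftilde_add_startJump hxS hC hlim hδ.2 ht
  · rw [mvEtaD, mvEtaD, if_neg hδ₀, if_neg hδ₀]
    exact mvEtaDelta_Ftilde_add_startJump hxS hC hlim hδ.2 ht

theorem mvEtaD_le_mvEtaDelta (hδ : δ ∈ Ico 0 δbar) (ht : t ≤ T) :
    mvEtaD F xbar A δ S t ≤ mvEtaDelta F xbar A δbar S T := by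
  refine le_trans ?_ (mvEtaDelta_monotone ht)
  unfold mvEtaD
  split_ifs
  · exact mvEta_le_mvEtaDelta (hδ.1.trans_lt hδ.2)
  · exact mvEtaDelta_mono_delta hδ.2.le

end Endpoint

theorem statement6_general {n k : ℕ} (F : ℝ → En n → En k → Set (En n))
    (xbar : ℝ → En n) (A : Set (En k)) (S T : ℝ) (hx : ContinuousOn xbar (Set.Icc S T))
    (δbar : ℝ) (hfin : mvEtaDelta F xbar A δbar S T < ⊤)
    (hC2 : HypC2 F xbar A S T δbar) :
    ∀ δ ∈ Set.Ico 0 δbar,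
      (∀ t ∈ Set.Ioo S T,
        mvEtaD (Ftilde F xbar S T δbar) xbar A δ S t =
          mvEtaD F xbar A δ S t -
            ⨆ x ∈ Metric.closedBall (xbar S) δ, ⨆ a ∈ A,
              EMetric.hausdorffEdist (F S x a) (rightLim F T S x a)) ∧
      ∀ s t : ℝ, S < s → s ≤ t → t < T →
        mvEtaD (Ftilde F xbar S T δbar) xbar A δ S t -
            mvEtaD (Ftilde F xbar S T δbar) xbar A δ S s =
          mvEtaD F xbar A δ S t - mvEtaD F xbar A δ S s := by
  intro δ hδ
  have hid := fun t (ht : t ∈ Ioo S T) => mvEtaD_Ftilde_add_startJump hx hfin hC2 hδ ht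
  have hJ : ∀ t ∈ Ioo S T, startJump F xbar A S T δ ≠ ⊤ := fun t ht =>
    ne_top_of_le_ne_top (mvEtaD_le_mvEtaDelta hδ ht.2.le |>.trans_lt hfin).ne
      (hid t ht ▸ le_add_self)
  refine ⟨fun t ht => ?_, fun s t hs hst htT => ?_⟩
  · change _ = _ - startJump F xbar A S T δ
    rw [← hid t ht, ENNReal.add_sub_cancel_right (hJ t ht)]
  · have hsI : s ∈ Ioo S T := ⟨hs, hst.trans_lt htT⟩
    rw [← hid t ⟨hs.trans_le hst, htT⟩, ← hid s hsI,
      ENNReal.add_sub_add_eq_sub_right (hJ s hsI)]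

/-- Under the stated hypotheses, for every `δ ∈ (0,δ̄)` (and also
for `δ = 0`, interpreting `η^0 = η`, `η̃^0 = η̃`) and every `t ∈ (S,T)`:
`η̃^δ(t) = η^δ(t) − sup{ d_H(F(S,x,a), F(S⁺,x,a)) : x ∈ x̄(S)+δ𝔹, a ∈ A }`;
in particular `η̃^δ(t) − η̃^δ(s) = η^δ(t) − η^δ(s)` for every `[s,t] ⊂ (S,T)`. -/
theorem statement6 {n k : ℕ} (F : ℝ → En n → En k → Set (En n))
    (xbar : ℝ → En n) (A : Set (En k)) (S T : ℝ) (hST : S < T)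
    (hA : IsCompact A) (hx : ContinuousOn xbar (Set.Icc S T))
    (hBV : HasBVAlongUniformly F xbar A S T)
    (δbar : ℝ) (hδbar : 0 < δbar) (hfin : mvEtaDelta F xbar A δbar S T < ⊤)
    (hC1 : HypC1 F xbar A S T δbar) (hC2 : HypC2 F xbar A S T δbar) :
    ∀ δ ∈ Set.Ico 0 δbar,
      (∀ t ∈ Set.Ioo S T,
        mvEtaD (Ftilde F xbar S T δbar) xbar A δ S t =
          mvEtaD F xbar A δ S t -
            ⨆ x ∈ Metric.closedBall (xbar S) δ, ⨆ a ∈ A,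
              EMetric.hausdorffEdist (F S x a) (rightLim F T S x a)) ∧
      ∀ s t : ℝ, S < s → s ≤ t → t < T →
        mvEtaD (Ftilde F xbar S T δbar) xbar A δ S t -
            mvEtaD (Ftilde F xbar S T δbar) xbar A δ S s =
          mvEtaD F xbar A δ S t - mvEtaD F xbar A δ S s :=
  statement6_general F xbar A S T hx δbar hfin hC2
end
end

section
/- Consider the control system (S) with a control ū satisfying hypotheses (S1)–(S3) and (BV). For h ∈ ℝ let u^h be the shifted control u^h(t) = ū(S) if t−h < S, ū(t−h) if S ≤ t−h ≤ T, ū(T) if t−h > T, and let x^h be the solution of ẋ(t) = f(x(t),u^h(t)), x(S) = x₀ on [S,T]. Then: (i) for every h ≥ 0, ∫_[S,T] |f(x̄(t),u^h(t)) − f(x̄(t),ū(t))| dt ≤ 2 k₁ η_ū(T) h, where η_ū is the cumulative variation function of ū and x̄ = x⁰; and (ii) there exists a constant K₁, independent of h, such that ‖x^h − x̄‖_{L^∞} ≤ K₁ h for all h ≥ 0 sufficiently small. -/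
open Set Metric Filter MeasureTheory Pointwise
open scoped ENNReal Topology

noncomputable section

/-- A partition `{t₀ = S, t₁, …, t_N = t}` of the interval `[S, t]`. -/
structure TimePartition (S t : ℝ) where
  N : ℕ
  pts : ℕ → ℝ
  hN : 0 < N
  first : pts 0 = S
  last : pts N = t
  mono : ∀ i, i < N → pts i < pts (i + 1)

/-- `diam(𝒯) ≤ ε` : every subinterval of the partition has length at most `ε`. -/
def TimePartition.diamLE {S t : ℝ} (P : TimePartition S t) (ε : ℝ) : Prop :=
  ∀ i, i < P.N → P.pts (i + 1) - P.pts i ≤ ε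

/-- The sum `I^δ(𝒯) = Σᵢ sup { |m(tᵢ₊₁,x) − m(tᵢ,x)| : x ∈ x̄([tᵢ,tᵢ₊₁]) + δ𝔹 }`
for a function `m` along `x̄` (distances measured by `edist` in the target). -/
noncomputable def fSum {E α : Type*} [NormedAddCommGroup E] [PseudoEMetricSpace α]
    (m : ℝ → E → α) (xbar : ℝ → E) (δ : ℝ) {S t : ℝ} (P : TimePartition S t) : ℝ≥0∞ :=
  ∑ i ∈ Finset.range P.N,
    ⨆ x ∈ xbar '' Set.Icc (P.pts i) (P.pts (i + 1)) + Metric.closedBall (0 : E) δ,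
      edist (m (P.pts (i + 1)) x) (m (P.pts i) x)

/-- The `(δ,ε)`-perturbed cumulative variation function `η^δ_ε(t)` of `m(·,x)` along
`x̄`: the supremum of `I^δ(𝒯)` over partitions `𝒯` of `[S,t]` with `diam(𝒯) ≤ ε`. -/
noncomputable def fEtaEps {E α : Type*} [NormedAddCommGroup E] [PseudoEMetricSpace α]
    (m : ℝ → E → α) (xbar : ℝ → E) (δ ε : ℝ) (S t : ℝ) : ℝ≥0∞ :=
  ⨆ (P : TimePartition S t) (_ : P.diamLE ε), fSum m xbar δ P

/-- The `δ`-perturbed cumulative variation function `η^δ(t) = lim_{ε↓0} η^δ_ε(t)`. -/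
noncomputable def fEtaDelta {E α : Type*} [NormedAddCommGroup E] [PseudoEMetricSpace α]
    (m : ℝ → E → α) (xbar : ℝ → E) (δ : ℝ) (S t : ℝ) : ℝ≥0∞ :=
  ⨅ (ε : ℝ) (_ : 0 < ε), fEtaEps m xbar δ ε S t

/-- The cumulative variation function `η(t) = lim_{δ↓0} η^δ(t)` of `m(·,x)` along `x̄`. -/
noncomputable def fEta {E α : Type*} [NormedAddCommGroup E] [PseudoEMetricSpace α]
    (m : ℝ → E → α) (xbar : ℝ → E) (S t : ℝ) : ℝ≥0∞ :=
  ⨅ (δ : ℝ) (_ : 0 < δ), fEtaDelta m xbar δ S t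

/-- `m(·,x)` has bounded variation along `x̄` on `[S,T]` : `η(T) < ∞`. -/
def FunHasBVAlong {E α : Type*} [NormedAddCommGroup E] [PseudoEMetricSpace α]
    (m : ℝ → E → α) (xbar : ℝ → E) (S T : ℝ) : Prop :=
  fEta m xbar S T < ⊤

/-- Hypothesis (BV1): `x̄` is continuous and, for some `δ' > 0`, `m(t,·)` is
continuously differentiable on the interior of `x̄(t) + δ'𝔹` for all `t ∈ [S,T]`. -/
def HypBV1 {n r : ℕ} (m : ℝ → En n → En r) (xbar : ℝ → En n) (S T δ' : ℝ) : Prop :=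
  ContinuousOn xbar (Set.Icc S T) ∧ 0 < δ' ∧
    ∀ t ∈ Set.Icc S T, ContDiffOn ℝ 1 (m t) (Metric.ball (xbar t) δ')

/-- Hypothesis (BV2): both `m(·,x)` and `∇ₓm(·,x)` have bounded variation along `x̄`. -/
def HypBV2 {n r : ℕ} (m : ℝ → En n → En r) (xbar : ℝ → En n) (S T : ℝ) : Prop :=
  FunHasBVAlong m xbar S T ∧
    FunHasBVAlong (fun t x => fderiv ℝ (m t) x) xbar S T

/-- The pairing `∫ g·dμʲ = Σᵢ ⟨g(tᵢ), m(tᵢ₊₁,ξᵢ) − m(tᵢ,ξᵢ)⟩` of a continuous function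
`g` with the discrete `ℝʳ`-valued measure `μʲ = Σᵢ [m(tᵢ₊₁,ξᵢ) − m(tᵢ,ξᵢ)] δ_{tᵢ}`. -/
noncomputable def discretePairing {n r : ℕ} (m : ℝ → En n → En r) {S T : ℝ}
    (P : TimePartition S T) (ξ : ℕ → En n) (g : ℝ → En r) : ℝ :=
  ∑ i ∈ Finset.range P.N, ∑ l : Fin r,
    g (P.pts i) l * (m (P.pts (i + 1)) (ξ i) l - m (P.pts i) (ξ i) l)

/-- The integral `∫ f dμ` of a real function against a signed Borel measure,
via the Jordan decomposition. -/
noncomputable def signedIntegral (μ : MeasureTheory.SignedMeasure ℝ) (f : ℝ → ℝ) : ℝ :=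
  (∫ t, f t ∂μ.toJordanDecomposition.posPart) -
    ∫ t, f t ∂μ.toJordanDecomposition.negPart

/-- The pairing `∫ g·dμ = Σ_l ∫ g_l dμ_l` of a continuous function with an
`ℝʳ`-valued Borel measure `μ` (given through its `r` signed components). -/
noncomputable def signedPairing {r : ℕ} (μ : Fin r → MeasureTheory.SignedMeasure ℝ)
    (g : ℝ → En r) : ℝ :=
  ∑ l : Fin r, signedIntegral (μ l) fun t => g t l

/-- `μ` (an `ℝʳ`-valued Borel measure on `[S,T]`, given through its signed components)
is the partial variation measure `B ↦ ∫_B d_t m(t,x̄(t))` of `m(·,x)` along `x̄`: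
it is supported on `[S,T]` and is the weak* limit of the discrete measures
`μʲ = Σᵢ [m(tʲᵢ₊₁,ξʲᵢ) − m(tʲᵢ,ξʲᵢ)] δ_{tʲᵢ}`, for every sequence of partitions of
`[S,T]` with diameters tending to `0` and points `ξʲᵢ = x̄(t)`, `t ∈ [tʲᵢ,tʲᵢ₊₁]`. -/
def IsPartialVariationMeasure {n r : ℕ} (m : ℝ → En n → En r) (xbar : ℝ → En n)
    (S T : ℝ) (μ : Fin r → MeasureTheory.SignedMeasure ℝ) : Prop :=
  (∀ l, (μ l).restrict (Set.Icc S T)ᶜ = 0) ∧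
  ∀ (P : ℕ → TimePartition S T) (ξ : ℕ → ℕ → En n),
    (∀ ε : ℝ, 0 < ε → ∃ J : ℕ, ∀ j ≥ J, (P j).diamLE ε) →
    (∀ j i, i < (P j).N →
      ∃ t ∈ Set.Icc ((P j).pts i) ((P j).pts (i + 1)), ξ j i = xbar t) →
    ∀ g : ℝ → En r, Continuous g →
      Tendsto (fun j => discretePairing m (P j) (ξ j) g) atTop (𝓝 (signedPairing μ g))


/-- The shifted (time-delayed, for `h > 0`) control `u^h`:
`u^h(t) = ū(S)` if `t−h < S`, `ū(t−h)` if `S ≤ t−h ≤ T`, and `ū(T)` if `t−h > T`. -/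
noncomputable def shiftedControl {k : ℕ} (ubar : ℝ → En k) (S T h t : ℝ) : En k :=
  if t - h < S then ubar S
  else if t - h ≤ T then ubar (t - h)
  else ubar T


/-!
Write `u^h(t) = v(t - h)` with `v = ū ∘ proj_[S,T]`, a function of bounded variation on `ℝ`,
and let `V(x)` be the variation of `v` on `(-∞, x]`. Then `|v(t - h) - v(t)| ≤ V(t) - V(t - h)`,
and integrating over `[S, T]` the two integrals of `V` telescope to
`∫_{T-h}^T V - ∫_{S-h}^S V ≤ h · η_ū(T)`; (S3) turns this into (i).
For (ii), `ψ = |x^h - x̄|` satisfies `ψ(t) ≤ ∫ |f(x̄, u^h) - f(x̄, ū)| + K ∫_S^t ψ`, whose first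
term is bounded by (i), and Grönwall's inequality gives `K₁ = 2 k₁ η_ū(T) e^{K (T - S)}`.
The state equation is only given in integral form, so one first shows that every `x^h` is
continuous with integrable right-hand side, using the a priori bound from linear growth.
-/

theorem LocallyBoundedVariationOn.measurable {E : Type*} [NormedAddCommGroup E]
    [NormedSpace ℝ E] [FiniteDimensional ℝ E] [MeasurableSpace E] [BorelSpace E]
    {v : ℝ → E} (hv : LocallyBoundedVariationOn v univ) : Measurable v := by
  let b := Module.finBasis ℝ E
  have hcoord : ∀ i, Measurable fun t => b.repr (v t) i := fun i => by
    let ℓ : E →L[ℝ] ℝ := LinearMap.toContinuousLinearMap (b.coord i)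
    obtain ⟨p, q, hp, hq, hpq⟩ :=
      (ℓ.lipschitz.comp_locallyBoundedVariationOn hv).exists_monotoneOn_sub_monotoneOn
    have hpq' : (fun t => b.repr (v t) i) = p - q := hpq
    rw [hpq']
    exact (monotoneOn_univ.mp hp).measurable.sub (monotoneOn_univ.mp hq).measurable
  have hsum : v = fun t => ∑ i, b.repr (v t) i • b i := funext fun t => (b.sum_repr (v t)).symm
  rw [hsum]
  exact Finset.measurable_sum _ fun i _ => (hcoord i).smul_const _

theorem BoundedVariationOn.integral_dist_comp_sub_le {E : Type*} [PseudoMetricSpace E]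
    {v : ℝ → E} (hv : BoundedVariationOn v univ) {h : ℝ} (hh : 0 ≤ h) {a b : ℝ} (hab : a ≤ b) :
    ∫ t in Icc a b, dist (v (t - h)) (v t) ≤ h * (eVariationOn v univ).toReal := by
  have hfin : ∀ s, eVariationOn v s ≠ ⊤ := fun s =>
    ne_top_of_le_ne_top hv (eVariationOn.mono v (subset_univ s))
  set V : ℝ → ℝ := fun x => (eVariationOn v (Iic x)).toReal
  have hVmono : Monotone V := fun x y hxy =>
    ENNReal.toReal_mono (hfin _) (eVariationOn.mono v (Iic_subset_Iic.mpr hxy))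
  have hVint : ∀ a b, IntervalIntegrable V volume a b := fun _ _ => hVmono.intervalIntegrable
  have hVhint : IntervalIntegrable (fun t => V (t - h)) volume a b :=
    (hVmono.comp fun x y hxy => sub_le_sub_right hxy h).intervalIntegrable
  have hdist : ∀ t, dist (v (t - h)) (v t) ≤ V t - V (t - h) := by
    intro t
    have hsplit : eVariationOn v (Iic (t - h)) + eVariationOn v (Icc (t - h) t) =
        eVariationOn v (Iic t) := by
      rw [← eVariationOn.union v isGreatest_Iic (isLeast_Icc (by linarith)),
        Iic_union_Icc_eq_Iic (by linarith)]
    have hedist : edist (v (t - h)) (v t) ≤ eVariationOn v (Icc (t - h) t) :=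
      eVariationOn.edist_le v (left_mem_Icc.2 (by linarith)) (right_mem_Icc.2 (by linarith))
    have hVt : V t = V (t - h) + (eVariationOn v (Icc (t - h) t)).toReal := by
      simp only [V, ← hsplit, ENNReal.toReal_add (hfin _) (hfin _)]
    rw [dist_edist, hVt, add_sub_cancel_left]
    exact ENNReal.toReal_mono (hfin _) hedist
  have hshift : ∫ t in a..b, V (t - h) = ∫ t in a - h..b - h, V t :=
    intervalIntegral.integral_comp_sub_right V h
  have hhead : ∫ t in b - h..b, V t ≤ h * (eVariationOn v univ).toReal := by
    have := intervalIntegral.integral_mono_on (by linarith : b - h ≤ b) (hVint _ _)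
      intervalIntegrable_const fun t _ =>
        ENNReal.toReal_mono hv (eVariationOn.mono v (subset_univ (Iic t)))
    simpa using this
  have htail : 0 ≤ ∫ t in a - h..a, V t :=
    intervalIntegral.integral_nonneg (by linarith) fun t _ => ENNReal.toReal_nonneg
  calc ∫ t in Icc a b, dist (v (t - h)) (v t) ≤ ∫ t in Icc a b, (V t - V (t - h)) := by
        have hint : IntegrableOn (fun t => V t - V (t - h)) (Icc a b) := by
          rw [integrableOn_Icc_iff_integrableOn_Ioc,
            ← intervalIntegrable_iff_integrableOn_Ioc_of_le hab]
          exact (hVint a b).sub hVhint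
        exact integral_mono_of_nonneg (Eventually.of_forall fun t => dist_nonneg) hint
          (Eventually.of_forall hdist)
    _ = (∫ t in b - h..b, V t) - ∫ t in a - h..a, V t := by
        rw [integral_Icc_eq_integral_Ioc, ← intervalIntegral.integral_of_le hab,
          intervalIntegral.integral_sub (hVint a b) hVhint, hshift]
        have e1 := intervalIntegral.integral_add_adjacent_intervals (hVint (a - h) (b - h))
          (hVint (b - h) b)
        have e2 := intervalIntegral.integral_add_adjacent_intervals (hVint (a - h) a) (hVint a b)
        linarith
    _ ≤ h * (eVariationOn v univ).toReal := by linarith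

theorem BoundedVariationOn.integrableOn_dist_comp_sub {E : Type*} [PseudoMetricSpace E]
    [MeasurableSpace E] [BorelSpace E] [SecondCountableTopology E] {v : ℝ → E}
    (hv : BoundedVariationOn v univ) (hvm : Measurable v) (h : ℝ) {s : Set ℝ}
    (hs : volume s ≠ ⊤) : IntegrableOn (fun t => dist (v (t - h)) (v t)) s :=
  Measure.integrableOn_of_bounded (M := (eVariationOn v univ).toReal) hs
    ((hvm.comp (measurable_id.sub_const h)).dist hvm).aestronglyMeasurable
    (ae_of_all _ fun t => by
      rw [Real.norm_of_nonneg dist_nonneg, dist_edist]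
      exact ENNReal.toReal_mono hv (eVariationOn.edist_le v (mem_univ _) (mem_univ _)))

theorem eVariationOn_comp_projIcc {E : Type*} [PseudoEMetricSpace E] (u : ℝ → E) {S T : ℝ}
    (hST : S ≤ T) :
    eVariationOn (fun t => u (projIcc S T hST t)) univ = eVariationOn u (Icc S T) := by
  have hrange : range (Subtype.val ∘ projIcc S T hST) = Icc S T := by
    rw [range_comp, range_projIcc, image_univ, Subtype.range_coe]
  have hcomp := eVariationOn.comp_eq_of_monotoneOn u (Subtype.val ∘ projIcc S T hST)
    (((Subtype.mono_coe _).comp (monotone_projIcc hST)).monotoneOn univ)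
  rwa [image_univ, hrange] at hcomp

theorem BoundedVariationOn.comp_projIcc {E : Type*} [PseudoEMetricSpace E] {u : ℝ → E}
    {S T : ℝ} (hST : S ≤ T) (hu : BoundedVariationOn u (Icc S T)) :
    BoundedVariationOn (fun t => u (projIcc S T hST t)) univ := by
  rwa [BoundedVariationOn, eVariationOn_comp_projIcc u hST]

section ShiftedControl

variable {k : ℕ} {ubar : ℝ → En k} {S T : ℝ}

theorem shiftedControl_eq (hST : S ≤ T) (h t : ℝ) :
    shiftedControl ubar S T h t = ubar (projIcc S T hST (t - h)) := by
  unfold shiftedControl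
  split_ifs with hS hT
  · rw [projIcc_of_le_left hST hS.le]
  · rw [projIcc_of_mem hST ⟨not_lt.mp hS, hT⟩]
  · rw [projIcc_of_right_le hST (not_le.mp hT).le]

theorem shiftedControl_zero_of_mem {t : ℝ} (ht : t ∈ Icc S T) :
    shiftedControl ubar S T 0 t = ubar t := by
  rw [shiftedControl_eq (ht.1.trans ht.2), sub_zero, projIcc_of_mem _ ht]

theorem shiftedControl_mem {Ω : Set (En k)} (hST : S ≤ T) (hΩ : ∀ t ∈ Icc S T, ubar t ∈ Ω)
    (h t : ℝ) : shiftedControl ubar S T h t ∈ Ω := by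
  rw [shiftedControl_eq hST]
  exact hΩ _ (projIcc S T hST (t - h)).2

theorem measurable_shiftedControl (hST : S ≤ T) (hBV : BoundedVariationOn ubar (Icc S T))
    (h : ℝ) : Measurable (shiftedControl ubar S T h) := by
  rw [funext (shiftedControl_eq hST h)]
  exact (hBV.comp_projIcc hST).locallyBoundedVariationOn.measurable.comp
    (measurable_id.sub_const h)

theorem norm_shiftedControl_sub_eq_dist (hST : S ≤ T) (h : ℝ) {t : ℝ} (ht : t ∈ Icc S T) :
    ‖shiftedControl ubar S T h t - ubar t‖ =
      dist (ubar (projIcc S T hST (t - h))) (ubar (projIcc S T hST t)) := by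
  rw [shiftedControl_eq hST, dist_eq_norm, projIcc_of_mem hST ht]

theorem integrableOn_norm_shiftedControl_sub (hST : S ≤ T)
    (hBV : BoundedVariationOn ubar (Icc S T)) (h : ℝ) :
    IntegrableOn (fun t => ‖shiftedControl ubar S T h t - ubar t‖) (Icc S T) := by
  have hv := hBV.comp_projIcc hST
  exact (hv.integrableOn_dist_comp_sub hv.locallyBoundedVariationOn.measurable h
    measure_Icc_lt_top.ne).congr_fun
    (fun t ht => (norm_shiftedControl_sub_eq_dist hST h ht).symm) measurableSet_Icc

theorem integral_norm_shiftedControl_sub_le (hST : S ≤ T)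
    (hBV : BoundedVariationOn ubar (Icc S T)) {h : ℝ} (hh : 0 ≤ h) :
    ∫ t in Icc S T, ‖shiftedControl ubar S T h t - ubar t‖ ≤
      h * (eVariationOn ubar (Icc S T)).toReal := by
  rw [setIntegral_congr_fun measurableSet_Icc fun t ht => norm_shiftedControl_sub_eq_dist hST h ht,
    ← eVariationOn_comp_projIcc ubar hST]
  exact (hBV.comp_projIcc hST).integral_dist_comp_sub_le hh hST

theorem integral_norm_sub_shiftedControl_le {E : Type*} [NormedAddCommGroup E]
    {F : ℝ → En k → E} {Ω : Set (En k)} {k₁ h : ℝ} (hST : S ≤ T)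
    (hBV : BoundedVariationOn ubar (Icc S T)) (hΩ : ∀ t ∈ Icc S T, ubar t ∈ Ω) (hh : 0 ≤ h)
    (hk₁ : 0 ≤ k₁) (hF : ∀ t ∈ Icc S T, ∀ u ∈ Ω, ∀ u' ∈ Ω, ‖F t u - F t u'‖ ≤ k₁ * ‖u - u'‖) :
    ∫ t in Icc S T, ‖F t (shiftedControl ubar S T h t) - F t (ubar t)‖ ≤
      k₁ * (eVariationOn ubar (Icc S T)).toReal * h := by
  calc _ ≤ ∫ t in Icc S T, k₁ * ‖shiftedControl ubar S T h t - ubar t‖ :=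
        integral_mono_of_nonneg (ae_of_all _ fun _ => norm_nonneg _)
          ((integrableOn_norm_shiftedControl_sub hST hBV h).const_mul k₁)
          ((ae_restrict_iff' measurableSet_Icc).2 (ae_of_all _ fun t ht =>
            hF t ht _ (shiftedControl_mem hST hΩ h t) _ (hΩ t ht)))
    _ = k₁ * ∫ t in Icc S T, ‖shiftedControl ubar S T h t - ubar t‖ := integral_const_mul _ _
    _ ≤ k₁ * (h * (eVariationOn ubar (Icc S T)).toReal) := by
        gcongr
        exact integral_norm_shiftedControl_sub_le hST hBV hh
    _ = k₁ * (eVariationOn ubar (Icc S T)).toReal * h := by ring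

end ShiftedControl

theorem le_mul_exp_of_le_add_mul_integral {ψ : ℝ → ℝ} {a b C K : ℝ}
    (hψ : ContinuousOn ψ (Icc a b)) (hK : 0 ≤ K)
    (hbound : ∀ t ∈ Icc a b, ψ t ≤ C + K * ∫ s in a..t, ψ s) :
    ∀ t ∈ Icc a b, ψ t ≤ C * Real.exp (K * (t - a)) := by
  intro t ht
  have hab : a ≤ b := ht.1.trans ht.2
  -- extend `ψ` continuously to `ℝ` so that its primitive is differentiable everywhere
  set ψ' : ℝ → ℝ := fun s => ψ (projIcc a b hab s)
  have hψ'c : Continuous ψ' :=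
    hψ.comp_continuous (continuous_subtype_val.comp continuous_projIcc) fun s =>
      (projIcc a b hab s).2
  set Ψ : ℝ → ℝ := fun s => C + K * ∫ r in a..s, ψ' r
  have hΨ : ∀ s, HasDerivAt Ψ (K * ψ' s) s := fun s =>
    ((hψ'c.integral_hasStrictDerivAt a s).hasDerivAt.const_mul K).const_add C
  have hψΨ : ∀ s ∈ Icc a b, ψ s ≤ Ψ s := fun s hs => by
    have hint : ∫ r in a..s, ψ' r = ∫ r in a..s, ψ r :=
      intervalIntegral.integral_congr fun r hr => by
        rw [uIcc_of_le hs.1] at hr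
        simp only [ψ', projIcc_of_mem hab ⟨hr.1, hr.2.trans hs.2⟩]
    simpa only [Ψ, hint] using hbound s hs
  have hψ'ψ : ∀ s ∈ Icc a b, ψ' s = ψ s := fun s hs => by simp only [ψ', projIcc_of_mem hab hs]
  have hgron := le_gronwallBound_of_liminf_deriv_right_le (f := Ψ) (f' := fun s => K * ψ' s)
    (δ := C) (K := K) (ε := 0) (a := a) (b := b)
    (fun s _ => (hΨ s).continuousAt.continuousWithinAt)
    (fun s _ r hr => (hΨ s).hasDerivWithinAt.liminf_right_slope_le hr)
    (by simp [Ψ])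
    (fun s hs => by
      rw [hψ'ψ s (Ico_subset_Icc_self hs), add_zero]
      exact mul_le_mul_of_nonneg_left (hψΨ s (Ico_subset_Icc_self hs)) hK)
    t ht
  rw [gronwallBound_ε0] at hgron
  exact (hψΨ t ht).trans hgron

theorem integrableOn_comp_of_continuousOn_of_bounded {E U : Type*} [NormedAddCommGroup E]
    [MeasurableSpace E] [BorelSpace E] [SecondCountableTopology E] [TopologicalSpace U]
    [MeasurableSpace U] [OpensMeasurableSpace U] {f : E → U → E} {Ω : Set U} {c : ℝ}
    {w : ℝ → U} {y : ℝ → E} (hf : Continuous fun p : E × U => f p.1 p.2)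
    (hc : 0 ≤ c) (hgrow : ∀ x, ∀ u ∈ Ω, ‖f x u‖ ≤ c * (1 + ‖x‖)) (hw : Measurable w)
    (hwΩ : ∀ s, w s ∈ Ω) {s : Set ℝ} (hs : MeasurableSet s) (hs' : volume s ≠ ⊤) {M : ℝ}
    (hy : ContinuousOn y s) (hM : ∀ t ∈ s, ‖y t‖ ≤ M) :
    IntegrableOn (fun t => f (y t) (w t)) s := by
  refine ⟨(hf.measurable.comp_aemeasurable
      ((hy.aemeasurable hs).prodMk hw.aemeasurable)).aestronglyMeasurable,
    HasFiniteIntegral.restrict_of_bounded (C := c * (1 + M)) hs'.lt_top ?_⟩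
  rw [ae_restrict_iff' hs]
  refine Eventually.of_forall fun t ht => (hgrow _ _ (hwΩ t)).trans ?_
  gcongr
  exact hM t ht

section IntegralEquation

variable {E U : Type*} [NormedAddCommGroup E] [NormedSpace ℝ E]

/-- The integral is Bochner's: where `s ↦ f (y s) (w s)` is not integrable on `[S, t]` it
contributes `0`, so a solution is not assumed to be regular a priori. -/
def IsIntegralSolution (f : E → U → E) (w : ℝ → U) (x₀ : E) (S T : ℝ) (y : ℝ → E) : Prop :=
  ∀ t ∈ Icc S T, y t = x₀ + ∫ s in S..t, f (y s) (w s)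

variable {f : E → U → E} {Ω : Set U} {c : ℝ} {w : ℝ → U} {x₀ : E} {S T : ℝ} {y : ℝ → E}

theorem IsIntegralSolution.continuousOn_of_integrableOn (hy : IsIntegralSolution f w x₀ S T y)
    {t : ℝ} (ht : t ≤ T) (hint : IntegrableOn (fun s => f (y s) (w s)) (Icc S t)) :
    ContinuousOn y (Icc S t) :=
  (continuousOn_const.add (intervalIntegral.continuousOn_primitive hint)).congr fun s hs => by
    rw [hy s ⟨hs.1, hs.2.trans ht⟩, intervalIntegral.integral_of_le hs.1]
    rfl

theorem IsIntegralSolution.norm_le_add_integral (hy : IsIntegralSolution f w x₀ S T y)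
    (hgrow : ∀ x, ∀ u ∈ Ω, ‖f x u‖ ≤ c * (1 + ‖x‖)) (hwΩ : ∀ s, w s ∈ Ω) {t : ℝ}
    (ht : t ∈ Icc S T) (hint : IntegrableOn (fun s => f (y s) (w s)) (Icc S t))
    (hcont : ContinuousOn y (Icc S t)) :
    ‖y t‖ ≤ ‖x₀‖ + c * (t - S) + c * ∫ s in S..t, ‖y s‖ := by
  have hint' : IntervalIntegrable (fun s => ‖f (y s) (w s)‖) volume S t :=
    (intervalIntegrable_iff_integrableOn_Icc_of_le ht.1).2 hint.norm
  have hyint : IntervalIntegrable (fun s => ‖y s‖) volume S t :=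
    (hcont.norm.intervalIntegrable_of_Icc ht.1)
  calc ‖y t‖ ≤ ‖x₀‖ + ∫ s in S..t, ‖f (y s) (w s)‖ := by
        rw [hy t ht]
        refine (norm_add_le _ _).trans ?_
        gcongr
        exact intervalIntegral.norm_integral_le_integral_norm ht.1
    _ ≤ ‖x₀‖ + ∫ s in S..t, (c + c * ‖y s‖) := by
        gcongr
        refine intervalIntegral.integral_mono_on ht.1 hint'
          (intervalIntegrable_const.add (hyint.const_mul c)) fun s _ => ?_
        linarith [hgrow (y s) (w s) (hwΩ s)]
    _ = ‖x₀‖ + c * (t - S) + c * ∫ s in S..t, ‖y s‖ := by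
        rw [intervalIntegral.integral_add intervalIntegrable_const (hyint.const_mul c),
          intervalIntegral.integral_const, intervalIntegral.integral_const_mul, smul_eq_mul]
        ring

theorem IsIntegralSolution.norm_le (hy : IsIntegralSolution f w x₀ S T y) (hc : 0 ≤ c)
    (hgrow : ∀ x, ∀ u ∈ Ω, ‖f x u‖ ≤ c * (1 + ‖x‖)) (hwΩ : ∀ s, w s ∈ Ω) :
    ∀ t ∈ Icc S T, ‖y t‖ ≤ (‖x₀‖ + c * (T - S)) * Real.exp (c * (T - S)) := by
  intro t ht
  have hC : 0 ≤ ‖x₀‖ + c * (T - S) := by nlinarith [norm_nonneg x₀, ht.1.trans ht.2]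
  by_cases hint : IntegrableOn (fun s => f (y s) (w s)) (Icc S t)
  · have hcont := hy.continuousOn_of_integrableOn ht.2 hint
    have hbound : ∀ s ∈ Icc S t, ‖y s‖ ≤ ‖x₀‖ + c * (T - S) + c * ∫ r in S..s, ‖y r‖ :=
      fun s hs => by
        have := hy.norm_le_add_integral hgrow hwΩ ⟨hs.1, hs.2.trans ht.2⟩
          (hint.mono_set (Icc_subset_Icc le_rfl hs.2)) (hcont.mono (Icc_subset_Icc le_rfl hs.2))
        nlinarith [hs.2, ht.2]
    refine (le_mul_exp_of_le_add_mul_integral hcont.norm hc hbound t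
      (right_mem_Icc.2 ht.1)).trans (mul_le_mul_of_nonneg_left ?_ hC)
    exact Real.exp_le_exp.2 (mul_le_mul_of_nonneg_left (by linarith [ht.2]) hc)
  · have hyt : y t = x₀ := by
      rw [hy t ht, intervalIntegral.integral_of_le ht.1,
        integral_undef fun h => hint ((integrableOn_Icc_iff_integrableOn_Ioc).2 h), add_zero]
    rw [hyt]
    exact (le_add_of_nonneg_right (by nlinarith [ht.1.trans ht.2])).trans
      (le_mul_of_one_le_right hC (Real.one_le_exp (by nlinarith [ht.1.trans ht.2])))

theorem IsIntegralSolution.integrableOn [CompleteSpace E] [MeasurableSpace E] [BorelSpace E]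
    [SecondCountableTopology E] [TopologicalSpace U] [MeasurableSpace U] [OpensMeasurableSpace U]
    (hy : IsIntegralSolution f w x₀ S T y) (hST : S ≤ T)
    (hf : Continuous fun p : E × U => f p.1 p.2) (hc : 0 ≤ c)
    (hgrow : ∀ x, ∀ u ∈ Ω, ‖f x u‖ ≤ c * (1 + ‖x‖)) (hw : Measurable w) (hwΩ : ∀ s, w s ∈ Ω) :
    IntegrableOn (fun s => f (y s) (w s)) (Icc S T) := by
  have hM := hy.norm_le hc hgrow hwΩ
  -- `τ` is the supremum of the times up to which the integrand is integrable: before `τ` the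
  -- solution is continuous, after `τ` the integral is junk and the solution is constant.
  set B := {t ∈ Icc S T | IntegrableOn (fun s => f (y s) (w s)) (Icc S t)}
  have hSB : S ∈ B := ⟨left_mem_Icc.2 hST, by simp⟩
  have hBbdd : BddAbove B := ⟨T, fun t ht => ht.1.2⟩
  set τ := sSup B
  have hτ : τ ∈ Icc S T := ⟨le_csSup hBbdd hSB, csSup_le ⟨S, hSB⟩ fun t ht => ht.1.2⟩
  have hbefore : ContinuousOn y (Ioo S τ) := fun s hs => by
    obtain ⟨t, htB, hst⟩ := exists_lt_of_lt_csSup ⟨S, hSB⟩ hs.2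
    exact ((hy.continuousOn_of_integrableOn htB.1.2 htB.2 s ⟨hs.1.le, hst.le⟩).continuousAt
      (Icc_mem_nhds hs.1 hst)).continuousWithinAt
  have hafter : EqOn y (fun _ => x₀) (Ioc τ T) := fun t ht => by
    have hint : ¬ IntegrableOn (fun s => f (y s) (w s)) (Ioc S t) := fun h =>
      not_le.2 ht.1 (le_csSup hBbdd ⟨⟨hτ.1.trans ht.1.le, ht.2⟩,
        (integrableOn_Icc_iff_integrableOn_Ioc).2 h⟩)
    rw [hy t ⟨hτ.1.trans ht.1.le, ht.2⟩, intervalIntegral.integral_of_le (hτ.1.trans ht.1.le),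
      integral_undef hint, add_zero]
  have hIoo : IntegrableOn (fun s => f (y s) (w s)) (Ioo S τ) :=
    integrableOn_comp_of_continuousOn_of_bounded hf hc hgrow hw hwΩ measurableSet_Ioo
      measure_Ioo_lt_top.ne hbefore fun t ht => hM t ⟨ht.1.le, ht.2.le.trans hτ.2⟩
  have hIoc : IntegrableOn (fun s => f (y s) (w s)) (Ioc τ T) :=
    integrableOn_comp_of_continuousOn_of_bounded hf hc hgrow hw hwΩ measurableSet_Ioc
      measure_Ioc_lt_top.ne (continuousOn_const.congr hafter) fun t ht =>
        hM t ⟨hτ.1.trans ht.1.le, ht.2⟩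
  rw [integrableOn_Icc_iff_integrableOn_Ioc, ← Ioc_union_Ioc_eq_Ioc hτ.1 hτ.2]
  exact ((integrableOn_Ioc_iff_integrableOn_Ioo).2 hIoo).union hIoc

theorem IsIntegralSolution.norm_sub_le {z : ℝ → E} {w' : ℝ → U} {K D : ℝ}
    (hy : IsIntegralSolution f w x₀ S T y) (hz : IsIntegralSolution f w' x₀ S T z)
    (hyc : ContinuousOn y (Icc S T)) (hzc : ContinuousOn z (Icc S T))
    (hyi : IntegrableOn (fun s => f (y s) (w s)) (Icc S T))
    (hzi : IntegrableOn (fun s => f (z s) (w' s)) (Icc S T))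
    (hmix : IntegrableOn (fun s => f (z s) (w s)) (Icc S T)) (hK : 0 ≤ K)
    (hLip : ∀ s ∈ Icc S T, ∀ x x', ‖f x (w s) - f x' (w s)‖ ≤ K * ‖x - x'‖)
    (hD : ∫ s in Icc S T, ‖f (z s) (w s) - f (z s) (w' s)‖ ≤ D) :
    ∀ t ∈ Icc S T, ‖y t - z t‖ ≤ D * Real.exp (K * (T - S)) := by
  set φ := fun s => ‖f (z s) (w s) - f (z s) (w' s)‖
  have hφ : IntegrableOn φ (Icc S T) := (hmix.sub hzi).norm
  have hD0 : 0 ≤ D := (setIntegral_nonneg measurableSet_Icc fun _ _ => norm_nonneg _).trans hD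
  have hbound : ∀ t ∈ Icc S T, ‖y t - z t‖ ≤ D + K * ∫ s in S..t, ‖y s - z s‖ := by
    intro t ht
    have hsub : Icc S t ⊆ Icc S T := Icc_subset_Icc le_rfl ht.2
    have hii : ∀ {g : ℝ → ℝ}, IntegrableOn g (Icc S T) → IntervalIntegrable g volume S t :=
      fun hg => (intervalIntegrable_iff_integrableOn_Icc_of_le ht.1).2 (hg.mono_set hsub)
    have hyzi : IntervalIntegrable (fun s => K * ‖y s - z s‖) volume S t :=
      (((hyc.sub hzc).norm.mono hsub).intervalIntegrable_of_Icc ht.1).const_mul K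
    calc ‖y t - z t‖ = ‖∫ s in S..t, (f (y s) (w s) - f (z s) (w' s))‖ := by
          rw [hy t ht, hz t ht, intervalIntegral.integral_sub
            ((intervalIntegrable_iff_integrableOn_Icc_of_le ht.1).2 (hyi.mono_set hsub))
            ((intervalIntegrable_iff_integrableOn_Icc_of_le ht.1).2 (hzi.mono_set hsub)),
            add_sub_add_left_eq_sub]
      _ ≤ ∫ s in S..t, ‖f (y s) (w s) - f (z s) (w' s)‖ :=
          intervalIntegral.norm_integral_le_integral_norm ht.1
      _ ≤ ∫ s in S..t, (K * ‖y s - z s‖ + φ s) := by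
          refine intervalIntegral.integral_mono_on ht.1 (hii (hyi.sub hzi).norm)
            (hyzi.add (hii hφ)) fun s hs => ?_
          calc ‖f (y s) (w s) - f (z s) (w' s)‖
              ≤ ‖f (y s) (w s) - f (z s) (w s)‖ + φ s := norm_sub_le_norm_sub_add_norm_sub _ _ _
            _ ≤ K * ‖y s - z s‖ + φ s := by gcongr; exact hLip s (hsub hs) _ _
      _ = K * (∫ s in S..t, ‖y s - z s‖) + ∫ s in Icc S t, φ s := by
          rw [intervalIntegral.integral_add hyzi (hii hφ), intervalIntegral.integral_const_mul,
            integral_Icc_eq_integral_Ioc, ← intervalIntegral.integral_of_le ht.1]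
      _ ≤ K * (∫ s in S..t, ‖y s - z s‖) + D := by
          gcongr
          exact (setIntegral_mono_set hφ (Eventually.of_forall fun _ => norm_nonneg _)
            hsub.eventuallyLE).trans hD
      _ = D + K * ∫ s in S..t, ‖y s - z s‖ := add_comm _ _
  intro t ht
  refine (le_mul_exp_of_le_add_mul_integral (hyc.sub hzc).norm hK hbound t ht).trans ?_
  exact mul_le_mul_of_nonneg_left (Real.exp_le_exp.2 (by nlinarith [ht.2])) hD0

end IntegralEquation

theorem statement19_general {n m : ℕ} (f : En n → En m → En n)
    (Ω : Set (En m)) (x₀ : En n) (ubar : ℝ → En m) (S T : ℝ) (hST : S < T)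
    -- the state trajectories `x^h` (with `x̄ = x⁰`)
    (xh : ℝ → ℝ → En n)
    (hxh : ∀ h : ℝ, ∀ t ∈ Set.Icc S T,
      xh h t = x₀ + ∫ s in S..t, f (xh h s) (shiftedControl ubar S T h s))
    -- (S2)
    (hfc : Continuous fun p : En n × En m => f p.1 p.2)
    (hfC1 : ∀ u ∈ Ω, ContDiff ℝ 1 fun x => f x u)
    (c : ℝ) (hc : 0 < c) (hgrow : ∀ x : En n, ∀ u ∈ Ω, ‖f x u‖ ≤ c * (1 + ‖x‖))
    (K : ℝ) (hK : ∀ x : En n, ∀ u ∈ Ω, ‖fderiv ℝ (fun y => f y u) x‖ ≤ K)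
    (δ : ℝ) (hδ : 0 < δ)
    -- (S3)
    (k₁ : ℝ) (hk₁ : 0 < k₁)
    (hLip : ∀ t ∈ Set.Icc S T, ∀ x ∈ Metric.closedBall (xh 0 t) δ, ∀ u ∈ Ω, ∀ u' ∈ Ω,
      ‖f x u - f x u'‖ + ‖fderiv ℝ (fun y => f y u) x - fderiv ℝ (fun y => f y u') x‖ ≤
        k₁ * ‖u - u'‖)
    -- (BV) and the control constraint
    (hBV : BoundedVariationOn ubar (Set.Icc S T))
    (hΩ : ∀ t ∈ Set.Icc S T, ubar t ∈ Ω) :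
    (∀ h : ℝ, 0 ≤ h →
      (∫ t in Set.Icc S T,
          ‖f (xh 0 t) (shiftedControl ubar S T h t) - f (xh 0 t) (ubar t)‖) ≤
        2 * k₁ * (eVariationOn ubar (Set.Icc S T)).toReal * h) ∧
    ∃ K₁ : ℝ, ∃ ε > (0 : ℝ), ∀ h : ℝ, 0 ≤ h → h ≤ ε →
      ∀ t ∈ Set.Icc S T, ‖xh h t - xh 0 t‖ ≤ K₁ * h := by
  set η := (eVariationOn ubar (Icc S T)).toReal
  have hη : 0 ≤ η := ENNReal.toReal_nonneg
  have hwm := measurable_shiftedControl hST.le hBV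
  have hwΩ := shiftedControl_mem hST.le hΩ
  have hsol : ∀ h, IsIntegralSolution f (shiftedControl ubar S T h) x₀ S T (xh h) := hxh
  have hint := fun h => (hsol h).integrableOn hST.le hfc hc.le hgrow (hwm h) (hwΩ h)
  have hcont := fun h => (hsol h).continuousOn_of_integrableOn le_rfl (hint h)
  have hvariation : ∀ h : ℝ, 0 ≤ h → ∫ t in Icc S T,
      ‖f (xh 0 t) (shiftedControl ubar S T h t) - f (xh 0 t) (ubar t)‖ ≤ 2 * k₁ * η * h :=
    fun h hh => (integral_norm_sub_shiftedControl_le hST.le hBV hΩ hh hk₁.le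
      fun t ht u hu u' hu' => le_of_add_le_of_nonneg_left
        (hLip t ht _ (mem_closedBall_self hδ.le) u hu u' hu') (norm_nonneg _)).trans
      (by nlinarith [mul_nonneg (mul_nonneg hk₁.le hη) hh])
  refine ⟨hvariation, 2 * k₁ * η * Real.exp (K * (T - S)), 1, one_pos, fun h hh _ t ht => ?_⟩
  have hK0 : 0 ≤ K := (norm_nonneg _).trans (hK 0 _ (hwΩ 0 0))
  have hLipx : ∀ s ∈ Icc S T, ∀ x x', ‖f x (shiftedControl ubar S T h s) -
      f x' (shiftedControl ubar S T h s)‖ ≤ K * ‖x - x'‖ := fun s _ x x' =>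
    convex_univ.norm_image_sub_le_of_norm_fderiv_le
      (fun z _ => ((hfC1 _ (hwΩ h s)).differentiable one_ne_zero).differentiableAt)
      (fun z _ => hK z _ (hwΩ h s)) (mem_univ x') (mem_univ x)
  have hmix : IntegrableOn (fun s => f (xh 0 s) (shiftedControl ubar S T h s)) (Icc S T) :=
    integrableOn_comp_of_continuousOn_of_bounded hfc hc.le hgrow (hwm h) (hwΩ h) measurableSet_Icc
      measure_Icc_lt_top.ne (hcont 0) ((hsol 0).norm_le hc.le hgrow (hwΩ 0))
  have hD : ∫ s in Icc S T, ‖f (xh 0 s) (shiftedControl ubar S T h s) -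
      f (xh 0 s) (shiftedControl ubar S T 0 s)‖ ≤ 2 * k₁ * η * h := by
    rw [setIntegral_congr_fun measurableSet_Icc fun s hs => by
      rw [shiftedControl_zero_of_mem hs]]
    exact hvariation h hh
  calc ‖xh h t - xh 0 t‖ ≤ 2 * k₁ * η * h * Real.exp (K * (T - S)) :=
        (hsol h).norm_sub_le (hsol 0) (hcont h) (hcont 0) (hint h) (hint 0) hmix hK0 hLipx hD t ht
    _ = 2 * k₁ * η * Real.exp (K * (T - S)) * h := by ring

/-- For the control system `(S)` under (S1)–(S3) and (BV):
(i) for every `h ≥ 0`,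
`∫_{[S,T]} |f(x̄(t),u^h(t)) − f(x̄(t),ū(t))| dt ≤ 2 k₁ η_ū(T) h`, where `η_ū(T)` is
the total variation of `ū` on `[S,T]` and `x̄ = x⁰`; and (ii) there is a constant
`K₁`, independent of `h`, with `‖x^h − x̄‖_{L^∞} ≤ K₁ h` for all sufficiently small
`h ≥ 0`. -/
theorem statement19 {n m : ℕ} (f : En n → En m → En n) (g : En n → ℝ)
    (Ω : Set (En m)) (x₀ : En n) (ubar : ℝ → En m) (S T : ℝ) (hST : S < T)
    -- the state trajectories `x^h` (with `x̄ = x⁰`)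
    (xh : ℝ → ℝ → En n)
    (hxh : ∀ h : ℝ, ∀ t ∈ Set.Icc S T,
      xh h t = x₀ + ∫ s in S..t, f (xh h s) (shiftedControl ubar S T h s))
    -- (S1)
    (hg : ContDiff ℝ 1 g)
    -- (S2)
    (hfc : Continuous fun p : En n × En m => f p.1 p.2)
    (hfC1 : ∀ u ∈ Ω, ContDiff ℝ 1 fun x => f x u)
    (c : ℝ) (hc : 0 < c) (hgrow : ∀ x : En n, ∀ u ∈ Ω, ‖f x u‖ ≤ c * (1 + ‖x‖))
    (K : ℝ) (hK : ∀ x : En n, ∀ u ∈ Ω, ‖fderiv ℝ (fun y => f y u) x‖ ≤ K)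
    (δ : ℝ) (hδ : 0 < δ)
    (θ : ℝ → ℝ) (hθ0 : ∀ s, 0 ≤ θ s) (hθlim : Tendsto θ (𝓝[>] (0 : ℝ)) (𝓝 0))
    (hTaylor : ∀ t ∈ Set.Icc S T, ∀ x ∈ Metric.closedBall (xh 0 t) δ,
      ∀ x' ∈ Metric.closedBall (xh 0 t) δ, ∀ u ∈ Ω,
        ‖f x u - f x' u - fderiv ℝ (fun y => f y u) x' (x - x')‖ ≤
          θ ‖x - x'‖ * ‖x - x'‖)
    -- (S3)
    (k₁ : ℝ) (hk₁ : 0 < k₁)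
    (hLip : ∀ t ∈ Set.Icc S T, ∀ x ∈ Metric.closedBall (xh 0 t) δ, ∀ u ∈ Ω, ∀ u' ∈ Ω,
      ‖f x u - f x u'‖ + ‖fderiv ℝ (fun y => f y u) x - fderiv ℝ (fun y => f y u') x‖ ≤
        k₁ * ‖u - u'‖)
    -- (BV) and the control constraint
    (hBV : BoundedVariationOn ubar (Set.Icc S T))
    (hΩ : ∀ t ∈ Set.Icc S T, ubar t ∈ Ω) :
    (∀ h : ℝ, 0 ≤ h →
      (∫ t in Set.Icc S T,
          ‖f (xh 0 t) (shiftedControl ubar S T h t) - f (xh 0 t) (ubar t)‖) ≤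
        2 * k₁ * (eVariationOn ubar (Set.Icc S T)).toReal * h) ∧
    ∃ K₁ : ℝ, ∃ ε > (0 : ℝ), ∀ h : ℝ, 0 ≤ h → h ≤ ε →
      ∀ t ∈ Set.Icc S T, ‖xh h t - xh 0 t‖ ≤ K₁ * h :=
  statement19_general f Ω x₀ ubar S T hST xh hxh hfc hfC1 c hc hgrow K hK δ hδ k₁ hk₁ hLip hBV hΩ
end
end
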